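/- arXiv:2311.03267 — 6 statements merged into one kernel-verified Lean document; each statement's English description precedes it below -/
import Mathlib

section
/- If two tentative colorings χ, χ' : E → C ∪ {⊥} differ on exactly one edge e₀, then the symmetric difference F(E, χ) ⊕ F(E, χ') has at most 4 elements; if moreover χ(e₀) = ⊥ or χ'(e₀) = ⊥, then F(E, χ) ⊕ F(E, χ') has at most 3 elements. -/
/-- For a finite set `E` of edges (unordered pairs of distinct vertices), a palette `C`,
and a tentative coloring `χ : E → C ∪ {⊥}` (modelled as `Sym2 V → Option C`), the failed set
`F(E, χ) := {e ∈ E : χ(e) = ⊥} ∪ {e ∈ E : ∃ f ∈ E adjacent to e with χ(f) = χ(e) ≠ ⊥}`,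
where two edges are adjacent iff they are distinct and share an endpoint. -/
def failedSet {V : Type*} {C : Type*} (E : Set (Sym2 V)) (χ : Sym2 V → Option C) :
    Set (Sym2 V) :=
  {e ∈ E | χ e = none} ∪
    {e ∈ E | χ e ≠ none ∧ ∃ f ∈ E, f ≠ e ∧ (∃ x, x ∈ e ∧ x ∈ f) ∧ χ f = χ e}

lemma mem_failedSet_iff' {V : Type*} {C : Type*} {E : Set (Sym2 V)} {χ : Sym2 V → Option C}
    {e : Sym2 V} : e ∈ failedSet E χ ↔
      (e ∈ E ∧ χ e = none) ∨
        (e ∈ E ∧ χ e ≠ none ∧ ∃ f ∈ E, f ≠ e ∧ (∃ x, x ∈ e ∧ x ∈ f) ∧ χ f = χ e) := Iff.rfl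

/-- If two tentative colorings `χ, χ'` differ on exactly one edge `e₀ ∈ E`, then the symmetric
difference `F(E, χ) ⊕ F(E, χ')` has at most `4` elements; if moreover `χ(e₀) = ⊥` or
`χ'(e₀) = ⊥`, then it has at most `3` elements. -/
theorem stmt_0 {V : Type*} {C : Type*} (E : Finset (Sym2 V))
    (hE : ∀ e ∈ E, ¬ e.IsDiag)
    (χ χ' : Sym2 V → Option C) (e₀ : Sym2 V) (he₀ : e₀ ∈ E)
    (hdiff : χ e₀ ≠ χ' e₀)
    (hagree : ∀ e ∈ E, e ≠ e₀ → χ e = χ' e) :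
    (symmDiff (failedSet (E : Set (Sym2 V)) χ) (failedSet (E : Set (Sym2 V)) χ')).ncard ≤ 4 ∧
      ((χ e₀ = none ∨ χ' e₀ = none) →
        (symmDiff (failedSet (E : Set (Sym2 V)) χ)
            (failedSet (E : Set (Sym2 V)) χ')).ncard ≤ 3) := by
  classical
  induction e₀ using Sym2.ind with
  | _ a b =>
  set S := symmDiff (failedSet (E : Set (Sym2 V)) χ) (failedSet (E : Set (Sym2 V)) χ') with hSdef
  have hab : a ≠ b := by
    have := hE _ he₀
    simpa using this
  have hFsub : ∀ ψ : Sym2 V → Option C,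
      failedSet (E : Set (Sym2 V)) ψ ⊆ (E : Set (Sym2 V)) := by
    intro ψ e he
    rcases he with h | h
    · exact h.1
    · exact h.1
  have hSsub : S ⊆ (E : Set (Sym2 V)) := by
    intro e he
    rcases Set.mem_symmDiff.1 he with ⟨h, _⟩ | ⟨h, _⟩
    · exact hFsub χ h
    · exact hFsub χ' h
  have hEfin : (E : Set (Sym2 V)).Finite := E.finite_toSet
  have hSfin : S.Finite := hEfin.subset hSsub
  have hsame : ∀ e ∈ E, e ≠ s(a, b) → χ' e = χ e := fun e he hne => (hagree e he hne).symm
  -- an edge distinct from e₀ that conflicts with an edge distinct from e₀ fails in both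
  have hboth : ∀ e, e ∈ E → e ≠ s(a, b) → χ e ≠ none →
      (∃ f ∈ E, f ≠ e ∧ f ≠ s(a, b) ∧ (∃ x, x ∈ e ∧ x ∈ f) ∧ χ f = χ e) → e ∉ S := by
    rintro e he hne hcol ⟨f, hf, hfe, hfe0, hx, hcf⟩
    have h1 : e ∈ failedSet (E : Set (Sym2 V)) χ :=
      Or.inr ⟨he, hcol, f, hf, hfe, hx, hcf⟩
    have h2 : e ∈ failedSet (E : Set (Sym2 V)) χ' := by
      refine Or.inr ⟨he, ?_, f, hf, hfe, hx, ?_⟩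
      · rw [hsame e he hne]; exact hcol
      · rw [hsame e he hne, hsame f hf hfe0]; exact hcf
    intro hmem
    rcases Set.mem_symmDiff.1 hmem with ⟨_, h⟩ | ⟨_, h⟩
    · exact h h2
    · exact h h1
  -- structure of elements of S other than e₀
  have hstruct : ∀ e ∈ S, e ≠ s(a, b) → (a ∈ e ∨ b ∈ e) ∧ χ e ≠ none ∧
      (χ e = χ s(a, b) ∨ χ e = χ' s(a, b)) := by
    intro e heS hne
    have heE : e ∈ E := hSsub heS
    have hcol : χ e ≠ none := by
      intro h
      have h1 : e ∈ failedSet (E : Set (Sym2 V)) χ := Or.inl ⟨heE, h⟩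
      have h2 : e ∈ failedSet (E : Set (Sym2 V)) χ' :=
        Or.inl ⟨heE, by rw [hsame e heE hne]; exact h⟩
      rcases Set.mem_symmDiff.1 heS with ⟨_, h'⟩ | ⟨_, h'⟩
      · exact h' h2
      · exact h' h1
    rcases Set.mem_symmDiff.1 heS with ⟨hin, _⟩ | ⟨hin, _⟩
    · rcases hin with ⟨_, h⟩ | ⟨_, _, f, hf, hfe, hx, hcf⟩
      · exact absurd h hcol
      · have hf0 : f = s(a, b) := by
          by_contra hf0
          exact hboth e heE hne hcol ⟨f, hf, hfe, hf0, hx, hcf⟩ heS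
        subst hf0
        obtain ⟨x, hxe, hxf⟩ := hx
        constructor
        · rcases Sym2.mem_iff.1 hxf with rfl | rfl
          · exact Or.inl hxe
          · exact Or.inr hxe
        · exact ⟨hcol, Or.inl hcf.symm⟩
    · rcases hin with ⟨_, h⟩ | ⟨_, hcol', f, hf, hfe, hx, hcf⟩
      · exact absurd (by rw [← hsame e heE hne]; exact h) hcol
      · have hf0 : f = s(a, b) := by
          by_contra hf0
          refine hboth e heE hne hcol ⟨f, hf, hfe, hf0, hx, ?_⟩ heS
          rw [← hsame e heE hne, ← hsame f hf hf0]; exact hcf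
        subst hf0
        obtain ⟨x, hxe, hxf⟩ := hx
        constructor
        · rcases Sym2.mem_iff.1 hxf with rfl | rfl
          · exact Or.inl hxe
          · exact Or.inr hxe
        · exact ⟨hcol, Or.inr (by rw [← hsame e heE hne]; exact hcf.symm)⟩
  -- the four candidate sets
  set A1 : Set (Sym2 V) := {e ∈ S | e ≠ s(a, b) ∧ χ e = χ s(a, b) ∧ a ∈ e} with hA1
  set A2 : Set (Sym2 V) := {e ∈ S | e ≠ s(a, b) ∧ χ e = χ s(a, b) ∧ a ∉ e} with hA2
  set B1 : Set (Sym2 V) := {e ∈ S | e ≠ s(a, b) ∧ χ e = χ' s(a, b) ∧ a ∈ e} with hB1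
  set B2 : Set (Sym2 V) := {e ∈ S | e ≠ s(a, b) ∧ χ e = χ' s(a, b) ∧ a ∉ e} with hB2
  -- subsingleton: two distinct members would conflict with each other under both colorings
  have hsub : ∀ T : Set (Sym2 V), T ⊆ S →
      (∀ e ∈ T, e ≠ s(a, b) ∧ ∃ c, c ∈ e ∧ ∀ e' ∈ T, c ∈ e') →
      (∀ e ∈ T, ∀ e' ∈ T, χ e = χ e') → T.ncard ≤ 1 := by
    intro T hTS hvert hcoleq
    refine (Set.ncard_le_one (hSfin.subset hTS)).2 ?_
    intro e he e' he'
    by_contra hne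
    obtain ⟨hne0, c, hce, hcall⟩ := hvert e he
    obtain ⟨hne0', _⟩ := hvert e' he'
    have heS := hTS he
    have hstr := hstruct e heS hne0
    refine hboth e (hSsub heS) hne0 hstr.2.1
      ⟨e', hSsub (hTS he'), fun h => hne h.symm, hne0', ⟨c, hce, hcall e' he'⟩,
        (hcoleq e he e' he').symm⟩ heS
  have hA1card : A1.ncard ≤ 1 := by
    refine hsub A1 (fun e he => he.1) ?_ ?_
    · intro e he
      exact ⟨he.2.1, a, he.2.2.2, fun e' he' => he'.2.2.2⟩
    · intro e he e' he'
      rw [he.2.2.1, he'.2.2.1]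
  have hA2card : A2.ncard ≤ 1 := by
    refine hsub A2 (fun e he => he.1) ?_ ?_
    · intro e he
      refine ⟨he.2.1, b, ?_, ?_⟩
      · rcases (hstruct e he.1 he.2.1).1 with h | h
        · exact absurd h he.2.2.2
        · exact h
      · intro e' he'
        rcases (hstruct e' he'.1 he'.2.1).1 with h | h
        · exact absurd h he'.2.2.2
        · exact h
    · intro e he e' he'
      rw [he.2.2.1, he'.2.2.1]
  have hB1card : B1.ncard ≤ 1 := by
    refine hsub B1 (fun e he => he.1) ?_ ?_
    · intro e he
      exact ⟨he.2.1, a, he.2.2.2, fun e' he' => he'.2.2.2⟩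
    · intro e he e' he'
      rw [he.2.2.1, he'.2.2.1]
  have hB2card : B2.ncard ≤ 1 := by
    refine hsub B2 (fun e he => he.1) ?_ ?_
    · intro e he
      refine ⟨he.2.1, b, ?_, ?_⟩
      · rcases (hstruct e he.1 he.2.1).1 with h | h
        · exact absurd h he.2.2.2
        · exact h
      · intro e' he'
        rcases (hstruct e' he'.1 he'.2.1).1 with h | h
        · exact absurd h he'.2.2.2
        · exact h
    · intro e he e' he'
      rw [he.2.2.1, he'.2.2.1]
  -- covering
  have hcover : ∀ e ∈ S, e ≠ s(a, b) → e ∈ A1 ∪ A2 ∪ B1 ∪ B2 := by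
    intro e heS hne
    obtain ⟨_, _, hcc⟩ := hstruct e heS hne
    by_cases ha : a ∈ e
    · rcases hcc with h | h
      · exact Or.inl (Or.inl (Or.inl ⟨heS, hne, h, ha⟩))
      · exact Or.inl (Or.inr ⟨heS, hne, h, ha⟩)
    · rcases hcc with h | h
      · exact Or.inl (Or.inl (Or.inr ⟨heS, hne, h, ha⟩))
      · exact Or.inr ⟨heS, hne, h, ha⟩
  -- if e₀ ∈ S then one of the two color classes is empty
  have hkill : s(a, b) ∈ S → (A1 = ∅ ∧ A2 = ∅) ∨ (B1 = ∅ ∧ B2 = ∅) := by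
    intro h0
    rcases Set.mem_symmDiff.1 h0 with ⟨_, hnot⟩ | ⟨_, hnot⟩
    · -- e₀ ∉ F χ' : then B1, B2 empty
      right
      have hBempty : ∀ e, e ∈ B1 ∪ B2 → False := by
        rintro e (⟨heS, hne, hcol, _⟩ | ⟨heS, hne, hcol, _⟩) <;>
        · obtain ⟨hv, hcne, _⟩ := hstruct e heS hne
          refine hnot (Or.inr ⟨by exact_mod_cast he₀, ?_, e, hSsub heS, hne, ?_, ?_⟩)
          · rw [← hcol]; exact hcne
          · rcases hv with h | h
            · exact ⟨a, Sym2.mem_mk_left a b, h⟩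
            · exact ⟨b, Sym2.mem_mk_right a b, h⟩
          · rw [hsame e (hSsub heS) hne, hcol]
      exact ⟨Set.eq_empty_iff_forall_notMem.2 fun e he => hBempty e (Or.inl he),
        Set.eq_empty_iff_forall_notMem.2 fun e he => hBempty e (Or.inr he)⟩
    · -- e₀ ∉ F χ : then A1, A2 empty
      left
      have hAempty : ∀ e, e ∈ A1 ∪ A2 → False := by
        rintro e (⟨heS, hne, hcol, _⟩ | ⟨heS, hne, hcol, _⟩) <;>
        · obtain ⟨hv, hcne, _⟩ := hstruct e heS hne
          refine hnot (Or.inr ⟨by exact_mod_cast he₀, ?_, e, hSsub heS, hne, ?_, ?_⟩)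
          · rw [← hcol]; exact hcne
          · rcases hv with h | h
            · exact ⟨a, Sym2.mem_mk_left a b, h⟩
            · exact ⟨b, Sym2.mem_mk_right a b, h⟩
          · rw [hcol]
      exact ⟨Set.eq_empty_iff_forall_notMem.2 fun e he => hAempty e (Or.inl he),
        Set.eq_empty_iff_forall_notMem.2 fun e he => hAempty e (Or.inr he)⟩
  have hUfin : (A1 ∪ A2 ∪ B1 ∪ B2).Finite := by
    refine hSfin.subset ?_
    rintro e (((he | he) | he) | he) <;> exact he.1
  have hcard4 : S.ncard ≤ 4 := by
    by_cases h0 : s(a, b) ∈ S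
    · rcases hkill h0 with ⟨hA1e, hA2e⟩ | ⟨hB1e, hB2e⟩
      · have hsub' : S ⊆ insert s(a, b) (B1 ∪ B2) := by
          intro e heS
          by_cases hne : e = s(a, b)
          · exact hne ▸ Set.mem_insert _ _
          · rcases hcover e heS hne with ((h | h) | h) | h
            · rw [hA1e] at h; exact absurd h (Set.notMem_empty e)
            · rw [hA2e] at h; exact absurd h (Set.notMem_empty e)
            · exact Set.mem_insert_of_mem _ (Or.inl h)
            · exact Set.mem_insert_of_mem _ (Or.inr h)
        calc S.ncard ≤ (insert s(a, b) (B1 ∪ B2)).ncard :=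
              Set.ncard_le_ncard hsub' (((hSfin.subset (fun e he => he.1)).union
                (hSfin.subset (fun e he => he.1))).insert _)
          _ ≤ (B1 ∪ B2).ncard + 1 := Set.ncard_insert_le _ _
          _ ≤ (B1.ncard + B2.ncard) + 1 := by
              exact Nat.add_le_add_right (Set.ncard_union_le _ _) 1
          _ ≤ 4 := by omega
      · have hsub' : S ⊆ insert s(a, b) (A1 ∪ A2) := by
          intro e heS
          by_cases hne : e = s(a, b)
          · exact hne ▸ Set.mem_insert _ _
          · rcases hcover e heS hne with ((h | h) | h) | h
            · exact Set.mem_insert_of_mem _ (Or.inl h)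
            · exact Set.mem_insert_of_mem _ (Or.inr h)
            · rw [hB1e] at h; exact absurd h (Set.notMem_empty e)
            · rw [hB2e] at h; exact absurd h (Set.notMem_empty e)
        calc S.ncard ≤ (insert s(a, b) (A1 ∪ A2)).ncard :=
              Set.ncard_le_ncard hsub' (((hSfin.subset (fun e he => he.1)).union
                (hSfin.subset (fun e he => he.1))).insert _)
          _ ≤ (A1 ∪ A2).ncard + 1 := Set.ncard_insert_le _ _
          _ ≤ (A1.ncard + A2.ncard) + 1 := by
              exact Nat.add_le_add_right (Set.ncard_union_le _ _) 1
          _ ≤ 4 := by omega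
    · have hsub' : S ⊆ A1 ∪ A2 ∪ B1 ∪ B2 := by
        intro e heS
        by_cases hne : e = s(a, b)
        · exact absurd (hne ▸ heS) h0
        · exact hcover e heS hne
      calc S.ncard ≤ (A1 ∪ A2 ∪ B1 ∪ B2).ncard := Set.ncard_le_ncard hsub' hUfin
        _ ≤ A1.ncard + A2.ncard + B1.ncard + B2.ncard := by
            calc (A1 ∪ A2 ∪ B1 ∪ B2).ncard ≤ (A1 ∪ A2 ∪ B1).ncard + B2.ncard :=
                  Set.ncard_union_le _ _
              _ ≤ (A1 ∪ A2).ncard + B1.ncard + B2.ncard :=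
                  Nat.add_le_add_right (Set.ncard_union_le _ _) _
              _ ≤ A1.ncard + A2.ncard + B1.ncard + B2.ncard := by
                  exact Nat.add_le_add_right (Nat.add_le_add_right (Set.ncard_union_le _ _) _) _
        _ ≤ 4 := by omega
  refine ⟨hcard4, ?_⟩
  rintro (hnone | hnone)
  · -- χ e₀ = none : A1, A2 empty
    have hA1e : A1 = ∅ := by
      ext e
      simp only [Set.mem_empty_iff_false, iff_false]
      rintro ⟨heS, hne, hcol, _⟩
      exact (hstruct e heS hne).2.1 (hcol.trans hnone)
    have hA2e : A2 = ∅ := by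
      ext e
      simp only [Set.mem_empty_iff_false, iff_false]
      rintro ⟨heS, hne, hcol, _⟩
      exact (hstruct e heS hne).2.1 (hcol.trans hnone)
    have hsub' : S ⊆ insert s(a, b) (B1 ∪ B2) := by
      intro e heS
      by_cases hne : e = s(a, b)
      · exact hne ▸ Set.mem_insert _ _
      · rcases hcover e heS hne with ((h | h) | h) | h
        · rw [hA1e] at h; exact absurd h (Set.notMem_empty e)
        · rw [hA2e] at h; exact absurd h (Set.notMem_empty e)
        · exact Set.mem_insert_of_mem _ (Or.inl h)
        · exact Set.mem_insert_of_mem _ (Or.inr h)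
    calc S.ncard ≤ (insert s(a, b) (B1 ∪ B2)).ncard :=
          Set.ncard_le_ncard hsub' (((hSfin.subset (fun e he => he.1)).union
            (hSfin.subset (fun e he => he.1))).insert _)
      _ ≤ (B1 ∪ B2).ncard + 1 := Set.ncard_insert_le _ _
      _ ≤ (B1.ncard + B2.ncard) + 1 := Nat.add_le_add_right (Set.ncard_union_le _ _) 1
      _ ≤ 3 := by omega
  · -- χ' e₀ = none : B1, B2 empty
    have hB1e : B1 = ∅ := by
      ext e
      simp only [Set.mem_empty_iff_false, iff_false]
      rintro ⟨heS, hne, hcol, _⟩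
      exact (hstruct e heS hne).2.1 (hcol.trans hnone)
    have hB2e : B2 = ∅ := by
      ext e
      simp only [Set.mem_empty_iff_false, iff_false]
      rintro ⟨heS, hne, hcol, _⟩
      exact (hstruct e heS hne).2.1 (hcol.trans hnone)
    have hsub' : S ⊆ insert s(a, b) (A1 ∪ A2) := by
      intro e heS
      by_cases hne : e = s(a, b)
      · exact hne ▸ Set.mem_insert _ _
      · rcases hcover e heS hne with ((h | h) | h) | h
        · exact Set.mem_insert_of_mem _ (Or.inl h)
        · exact Set.mem_insert_of_mem _ (Or.inr h)
        · rw [hB1e] at h; exact absurd h (Set.notMem_empty e)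
        · rw [hB2e] at h; exact absurd h (Set.notMem_empty e)
    calc S.ncard ≤ (insert s(a, b) (A1 ∪ A2)).ncard :=
          Set.ncard_le_ncard hsub' (((hSfin.subset (fun e he => he.1)).union
            (hSfin.subset (fun e he => he.1))).insert _)
      _ ≤ (A1 ∪ A2).ncard + 1 := Set.ncard_insert_le _ _
      _ ≤ (A1.ncard + A2.ncard) + 1 := Nat.add_le_add_right (Set.ncard_union_le _ _) 1
      _ ≤ 3 := by omega
end

section
/- For any two tentative colorings χ, χ' : E → C ∪ {⊥}, the symmetric difference of the failed sets satisfies |F(E, χ) ⊕ F(E, χ')| ≤ 4 · |{e ∈ E : χ(e) ≠ χ'(e)}|. -/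
lemma failedSet_subset {V C : Type*} (E : Set (Sym2 V)) (χ : Sym2 V → Option C) :
    failedSet E χ ⊆ E := by
  intro e he
  rcases he with ⟨h, _⟩ | ⟨h, _⟩ <;> exact h

lemma mem_failed_adj {V C : Type*} {E : Set (Sym2 V)} {χ : Sym2 V → Option C}
    {e f : Sym2 V} {x : V} (he : e ∈ E) (hf : f ∈ E) (hne : f ≠ e) (hxe : x ∈ e)
    (hxf : x ∈ f) (hc : χ f = χ e) (h0 : χ e ≠ none) : e ∈ failedSet E χ :=
  Or.inr ⟨he, h0, f, hf, hne, ⟨x, hxe, hxf⟩, hc⟩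

open Classical in
noncomputable def pickFW {V C : Type*} (E : Finset (Sym2 V)) (χ : Sym2 V → Option C)
    (e : Sym2 V) : Sym2 V × V :=
  if h : ∃ p : Sym2 V × V, p.1 ∈ E ∧ p.1 ≠ e ∧ p.2 ∈ e ∧ p.2 ∈ p.1 ∧ χ p.1 = χ e
  then h.choose else (e, e.out.1)

lemma pickFW_spec {V C : Type*} {E : Finset (Sym2 V)} {χ : Sym2 V → Option C} {e : Sym2 V}
    (h : e ∈ failedSet (E : Set (Sym2 V)) χ) (hne : χ e ≠ none) :
    (pickFW E χ e).1 ∈ E ∧ (pickFW E χ e).1 ≠ e ∧ (pickFW E χ e).2 ∈ e ∧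
      (pickFW E χ e).2 ∈ (pickFW E χ e).1 ∧ χ (pickFW E χ e).1 = χ e := by
  rcases h with ⟨_, h0⟩ | ⟨_, _, f, hfE, hfne, ⟨x, hxe, hxf⟩, hc⟩
  · exact absurd h0 hne
  · have hex : ∃ p : Sym2 V × V, p.1 ∈ E ∧ p.1 ≠ e ∧ p.2 ∈ e ∧ p.2 ∈ p.1 ∧ χ p.1 = χ e :=
      ⟨(f, x), hfE, hfne, hxe, hxf, hc⟩
    rw [pickFW, dif_pos hex]
    exact hex.choose_spec

/-- Specification of the charging witness for a `χ`-failed, `χ'`-unfailed edge. -/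
lemma chargeSpec {V C : Type*} {E : Finset (Sym2 V)} {χ χ' : Sym2 V → Option C} {e : Sym2 V}
    (heq : χ e = χ' e) (heF : e ∈ failedSet (E : Set (Sym2 V)) χ)
    (heF' : e ∉ failedSet (E : Set (Sym2 V)) χ') :
    χ e ≠ none ∧ (pickFW E χ e).1 ∈ E ∧ (pickFW E χ e).1 ≠ e ∧ (pickFW E χ e).2 ∈ e ∧
      (pickFW E χ e).2 ∈ (pickFW E χ e).1 ∧ χ (pickFW E χ e).1 = χ e ∧
      χ (pickFW E χ e).1 ≠ χ' (pickFW E χ e).1 := by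
  have heE : e ∈ (E : Set (Sym2 V)) := failedSet_subset _ _ heF
  have h0 : χ e ≠ none := by
    intro hn
    exact heF' (Or.inl ⟨heE, heq ▸ hn⟩)
  obtain ⟨h1, h2, h3, h4, h5⟩ := pickFW_spec heF h0
  refine ⟨h0, h1, h2, h3, h4, h5, ?_⟩
  intro hcc
  apply heF'
  refine mem_failed_adj heE h1 h2 h3 h4 ?_ (by rw [← heq]; exact h0)
  rw [← hcc, h5, heq]

/-- For any two tentative colorings `χ, χ' : E → C ∪ {⊥}`, one has
`|F(E, χ) ⊕ F(E, χ')| ≤ 4 · |{e ∈ E : χ(e) ≠ χ'(e)}|`. -/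
theorem stmt_1 {V : Type*} {C : Type*} (E : Finset (Sym2 V))
    (hE : ∀ e ∈ E, ¬ e.IsDiag)
    (χ χ' : Sym2 V → Option C) :
    (symmDiff (failedSet (E : Set (Sym2 V)) χ) (failedSet (E : Set (Sym2 V)) χ')).ncard ≤
      4 * {e | e ∈ E ∧ χ e ≠ χ' e}.ncard := by
  classical
  set F := failedSet (E : Set (Sym2 V)) χ with hFdef
  set F' := failedSet (E : Set (Sym2 V)) χ' with hF'def
  set D : Finset (Sym2 V) := E.filter (fun e => χ e ≠ χ' e) with hDdef
  have hRHS : {e | e ∈ E ∧ χ e ≠ χ' e} = (D : Set (Sym2 V)) := by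
    ext e; simp [hDdef]
  rw [hRHS, Set.ncard_coe_finset]
  -- the target finset
  set T : Finset (Sym2 V × Bool × V) :=
    D.biUnion (fun f => {f} ×ˢ ((Finset.univ : Finset Bool) ×ˢ {f.out.1, f.out.2})) with hTdef
  have hmemT : ∀ p : Sym2 V × Bool × V, p.1 ∈ D → p.2.2 ∈ p.1 → p ∈ T := by
    rintro ⟨f, b, x⟩ h1 h2
    have hx : x = f.out.1 ∨ x = f.out.2 := by
      have := h2
      rw [← f.out_eq] at this
      exact Sym2.mem_iff.mp this
    simp only [hTdef, Finset.mem_biUnion]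
    exact ⟨f, h1, by simp [Finset.mem_product, hx]⟩
  have hTcard : T.card = 4 * D.card := by
    rw [hTdef, Finset.card_biUnion]
    · rw [Finset.sum_congr rfl (g := fun _ => 4), Finset.sum_const, smul_eq_mul, mul_comm]
      intro f hf
      have hfE : f ∈ E := Finset.mem_filter.mp hf |>.1
      have hne : f.out.1 ≠ f.out.2 := by
        intro h
        apply hE f hfE
        rw [← f.out_eq, Sym2.isDiag_iff_proj_eq]
        exact h
      rw [Finset.card_product, Finset.card_product]
      simp [hne]
    · intro f hf g hg hfg
      simp only [Finset.disjoint_left]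
      rintro ⟨a, b, x⟩ ha hb
      simp only [Finset.mem_product, Finset.mem_singleton] at ha hb
      exact hfg (ha.1 ▸ hb.1 ▸ rfl)
  -- the charging map
  set φ : Sym2 V → Sym2 V × Bool × V := fun e =>
    if χ e = χ' e then
      (if e ∈ F then ((pickFW E χ e).1, true, (pickFW E χ e).2)
       else ((pickFW E χ' e).1, false, (pickFW E χ' e).2))
    else (e, (if e ∈ F then false else true), e.out.1) with hφdef
  set S := symmDiff F F' with hSdef
  have hSE : ∀ e ∈ S, e ∈ E := by
    intro e he
    rw [hSdef, Set.mem_symmDiff] at he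
    rcases he with ⟨h, _⟩ | ⟨h, _⟩
    · exact failedSet_subset _ _ h
    · exact failedSet_subset _ _ h
  have hmaps : ∀ e ∈ S, φ e ∈ (T : Set (Sym2 V × Bool × V)) := by
    intro e he
    have heS := he
    rw [hSdef, Set.mem_symmDiff] at heS
    by_cases heq : χ e = χ' e
    · rcases heS with ⟨hF1, hF2⟩ | ⟨hF1, hF2⟩
      · obtain ⟨-, h1, -, -, h4, -, h6⟩ := chargeSpec heq hF1 hF2
        simp only [hφdef, if_pos heq, if_pos hF1]
        exact hmemT _ (Finset.mem_filter.mpr ⟨h1, h6⟩) h4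
      · obtain ⟨-, h1, -, -, h4, -, h6⟩ := chargeSpec heq.symm hF1 hF2
        simp only [hφdef, if_pos heq, if_neg hF2]
        exact hmemT _ (Finset.mem_filter.mpr ⟨h1, fun hc => h6 (by rw [hc])⟩) h4
    · simp only [hφdef, if_neg heq]
      exact hmemT _ (Finset.mem_filter.mpr ⟨hSE e he, heq⟩) (Sym2.out_fst_mem e)
  have hinj : Set.InjOn φ S := by
    intro e1 he1 e2 he2 hphi
    by_contra hne
    have he1S := he1; have he2S := he2
    rw [hSdef, Set.mem_symmDiff] at he1S he2S
    -- helper: the mixed case leads to a contradiction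
    have mixed : ∀ (ψ ψ' : Sym2 V → Option C) (a b : Sym2 V),
        ψ a ≠ ψ' a → a ∈ failedSet (E : Set (Sym2 V)) ψ →
        a ∉ failedSet (E : Set (Sym2 V)) ψ' →
        ψ b = ψ' b → b ∈ failedSet (E : Set (Sym2 V)) ψ' →
        b ∉ failedSet (E : Set (Sym2 V)) ψ →
        (pickFW E ψ' b).1 = a → (pickFW E ψ' b).2 ∈ a → False := by
      intro ψ ψ' a b _ haF haF' hbeq hbF' hbF hp1 hp2
      obtain ⟨h0, _, h2, h3, _, h5, _⟩ := chargeSpec hbeq.symm hbF' hbF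
      apply haF'
      refine mem_failed_adj (failedSet_subset _ _ haF) (failedSet_subset _ _ hbF')
        (fun hc => h2 (hp1 ▸ hc ▸ rfl)) hp2 h3 ?_ ?_
      · rw [← hp1]; exact h5.symm
      · rw [← hp1, h5]; exact h0
    -- same-sign case for equal colors
    have same : ∀ (ψ ψ' : Sym2 V → Option C) (a b : Sym2 V), a ≠ b →
        ψ a = ψ' a → a ∈ failedSet (E : Set (Sym2 V)) ψ →
        a ∉ failedSet (E : Set (Sym2 V)) ψ' →
        ψ b = ψ' b → b ∈ failedSet (E : Set (Sym2 V)) ψ →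
        b ∉ failedSet (E : Set (Sym2 V)) ψ' →
        (pickFW E ψ a).1 = (pickFW E ψ b).1 → (pickFW E ψ a).2 = (pickFW E ψ b).2 → False := by
      intro ψ ψ' a b hab haeq haF haF' hbeq hbF hbF' hp1 hp2
      obtain ⟨ha0, _, _, ha3, ha4, ha5, _⟩ := chargeSpec haeq haF haF'
      obtain ⟨hb0, _, _, hb3, hb4, hb5, _⟩ := chargeSpec hbeq hbF hbF'
      apply haF'
      refine mem_failed_adj (failedSet_subset _ _ haF) (failedSet_subset _ _ hbF)
        (Ne.symm hab) ha3 (hp2 ▸ hb3) ?_ (by rw [← haeq]; exact ha0)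
      rw [← hbeq, ← haeq, ← hb5, ← hp1, ha5]
    by_cases h1 : χ e1 = χ' e1 <;> by_cases h2 : χ e2 = χ' e2
    · -- both B
      rcases he1S with ⟨hA, hB⟩ | ⟨hA, hB⟩ <;> rcases he2S with ⟨hC, hD⟩ | ⟨hC, hD⟩
      · simp only [hφdef, if_pos h1, if_pos h2, if_pos hA, if_pos hC, Prod.mk.injEq] at hphi
        exact same χ χ' e1 e2 hne h1 hA hB h2 hC hD hphi.1 hphi.2.2
      · simp only [hφdef, if_pos h1, if_pos h2, if_pos hA, if_neg hD, Prod.mk.injEq] at hphi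
        exact absurd hphi.2.1 (by simp)
      · simp only [hφdef, if_pos h1, if_pos h2, if_neg hB, if_pos hC, Prod.mk.injEq] at hphi
        exact absurd hphi.2.1 (by simp)
      · simp only [hφdef, if_pos h1, if_pos h2, if_neg hB, if_neg hD, Prod.mk.injEq] at hphi
        exact same χ' χ e1 e2 hne h1.symm hA hB h2.symm hC hD hphi.1 hphi.2.2
    · -- e1 B, e2 A
      rcases he2S with ⟨hC, hD⟩ | ⟨hC, hD⟩
      · -- e2 ∈ F \ F', bool false ; e1 B with bool — must match
        rcases he1S with ⟨hA, hB⟩ | ⟨hA, hB⟩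
        · simp only [hφdef, if_pos h1, if_neg h2, if_pos hA, if_pos hC, Prod.mk.injEq] at hphi
          exact absurd hphi.2.1 (by simp)
        · simp only [hφdef, if_pos h1, if_neg h2, if_neg hB, if_pos hC, Prod.mk.injEq] at hphi
          exact mixed χ χ' e2 e1 h2 hC hD h1 hA hB hphi.1
            (by rw [hphi.2.2]; exact Sym2.out_fst_mem e2)
      · rcases he1S with ⟨hA, hB⟩ | ⟨hA, hB⟩
        · simp only [hφdef, if_pos h1, if_neg h2, if_pos hA, if_neg hD, Prod.mk.injEq] at hphi
          exact mixed χ' χ e2 e1 (fun hc => h2 hc.symm) hC hD h1.symm hA hB hphi.1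
            (by rw [hphi.2.2]; exact Sym2.out_fst_mem e2)
        · simp only [hφdef, if_pos h1, if_neg h2, if_neg hB, if_neg hD, Prod.mk.injEq] at hphi
          exact absurd hphi.2.1 (by simp)
    · -- e1 A, e2 B
      rcases he1S with ⟨hC, hD⟩ | ⟨hC, hD⟩
      · rcases he2S with ⟨hA, hB⟩ | ⟨hA, hB⟩
        · simp only [hφdef, if_neg h1, if_pos h2, if_pos hA, if_pos hC, Prod.mk.injEq] at hphi
          exact absurd hphi.2.1 (by simp)
        · simp only [hφdef, if_neg h1, if_pos h2, if_neg hB, if_pos hC, Prod.mk.injEq] at hphi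
          exact mixed χ χ' e1 e2 h1 hC hD h2 hA hB hphi.1.symm
            (by rw [← hphi.2.2]; exact Sym2.out_fst_mem e1)
      · rcases he2S with ⟨hA, hB⟩ | ⟨hA, hB⟩
        · simp only [hφdef, if_neg h1, if_pos h2, if_pos hA, if_neg hD, Prod.mk.injEq] at hphi
          exact mixed χ' χ e1 e2 (fun hc => h1 hc.symm) hC hD h2.symm hA hB hphi.1.symm
            (by rw [← hphi.2.2]; exact Sym2.out_fst_mem e1)
        · simp only [hφdef, if_neg h1, if_pos h2, if_neg hB, if_neg hD, Prod.mk.injEq] at hphi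
          exact absurd hphi.2.1 (by simp)
    · -- both A
      simp only [hφdef, if_neg h1, if_neg h2, Prod.mk.injEq] at hphi
      exact hne hphi.1
  calc S.ncard ≤ (T : Set (Sym2 V × Bool × V)).ncard :=
        Set.ncard_le_ncard_of_injOn φ hmaps hinj T.finite_toSet
    _ = 4 * D.card := by rw [Set.ncard_coe_finset, hTcard]
end

section
/- Let e* be an edge on V with e* ∉ E and E' := E ∪ {e*}. Let χ : E → C ∪ {⊥} and χ' : E' → C ∪ {⊥} be tentative colorings, let χ̂ : E' → C ∪ {⊥} extend χ by setting χ̂(e*) := ⊥, and set A := {e ∈ E' : χ̂(e) ≠ χ'(e)}. Then |F(E, χ) ⊕ F(E', χ')| ≤ 4·|A| + 1. -/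
theorem Set.symmDiff_subset_insert_symmDiff_insert {α : Type*} (a : α) (s t : Set α) :
    symmDiff s t ⊆ insert a (symmDiff (insert a s) t) := by
  intro x
  by_cases h : x = a <;> simp [Set.mem_symmDiff, h]

open Finset in
theorem Sym2.card_sigma_toFinset_prod_le {α : Type*} [DecidableEq α] (A : Finset (Sym2 α)) :
    #(A.sigma fun f => f.toFinset ×ˢ (univ : Finset Bool)) ≤ 4 * #A := by
  rw [card_sigma, mul_comm, ← smul_eq_mul]
  refine sum_le_card_nsmul _ _ _ fun f _ => ?_
  rw [card_product, Sym2.card_toFinset, card_univ, Fintype.card_bool]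
  split_ifs <;> norm_num

section

variable {V C : Type*}

namespace failedSet

variable {E : Set (Sym2 V)} {χ χ₁ χ₂ : Sym2 V → Option C} {e f : Sym2 V} {x : V}

def ConflictsAt (E : Set (Sym2 V)) (χ : Sym2 V → Option C) (e f : Sym2 V) (x : V) : Prop :=
  f ∈ E ∧ f ≠ e ∧ x ∈ e ∧ x ∈ f ∧ χ f = χ e ∧ χ e ≠ none

theorem mem_iff :
    e ∈ failedSet E χ ↔ e ∈ E ∧ (χ e = none ∨ ∃ f x, ConflictsAt E χ e f x) := by
  simp only [failedSet, ConflictsAt, Set.mem_union, Set.mem_ofPred_eq]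
  grind

theorem subset : failedSet E χ ⊆ E := fun _ he => (mem_iff.1 he).1

theorem symmDiff_subset : symmDiff (failedSet E χ₁) (failedSet E χ₂) ⊆ E :=
  Set.symmDiff_subset_union.trans (Set.union_subset subset subset)

theorem ConflictsAt.mem_failedSet (h : ConflictsAt E χ e f x) (he : e ∈ E) :
    e ∈ failedSet E χ :=
  mem_iff.2 ⟨he, .inr ⟨f, x, h⟩⟩

theorem ConflictsAt.symm (h : ConflictsAt E χ e f x) (he : e ∈ E) : ConflictsAt E χ f e x := by
  obtain ⟨-, hfe, hxe, hxf, hχ, hne⟩ := h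
  exact ⟨he, hfe.symm, hxf, hxe, hχ.symm, hχ ▸ hne⟩

theorem ConflictsAt.congr (h : ConflictsAt E χ₁ e f x) (he : χ₁ e = χ₂ e) (hf : χ₁ f = χ₂ f) :
    ConflictsAt E χ₂ e f x := by
  obtain ⟨hfE, hfe, hxe, hxf, hχ, hne⟩ := h
  exact ⟨hfE, hfe, hxe, hxf, hf ▸ he ▸ hχ, he ▸ hne⟩

theorem exists_conflictsAt (h₁ : e ∈ failedSet E χ₁) (h₂ : e ∉ failedSet E χ₂)
    (he : χ₁ e = χ₂ e) : ∃ f x, ConflictsAt E χ₁ e f x ∧ χ₁ f ≠ χ₂ f := by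
  obtain ⟨heE, hnone | ⟨f, x, hf⟩⟩ := mem_iff.1 h₁
  · exact absurd (mem_iff.2 ⟨heE, .inl (he ▸ hnone)⟩) h₂
  exact ⟨f, x, hf, fun hf₂ => h₂ ((hf.congr he hf₂).mem_failedSet heE)⟩

theorem insert_update_none [DecidableEq V] (he : e ∉ E) :
    failedSet (insert e E) (Function.update χ e none) = insert e (failedSet E χ) := by
  ext f
  simp only [mem_iff, ConflictsAt, Set.mem_insert_iff, Function.update_apply]
  grind

theorem ConflictsAt.of_conflictsAt {e' : Sym2 V} (h : ConflictsAt E χ e f x)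
    (h' : ConflictsAt E χ e' f x) (he' : e' ∈ E) (hne : e' ≠ e) : ConflictsAt E χ e e' x := by
  obtain ⟨-, -, hxe, -, hχ, hne'⟩ := h
  obtain ⟨-, -, hxe', -, hχ', -⟩ := h'
  exact ⟨he', hne, hxe, hxe', hχ'.symm.trans hχ, hne'⟩

section Charging

variable (E : Set (Sym2 V)) (χ : Bool → Sym2 V → Option C)

/-- A token `⟨f, x, b⟩` is an edge `f`, one of its endpoints `x` and one of the two colorings. -/
def Charges (e : Sym2 V) : (Σ _ : Sym2 V, V × Bool) → Prop
  | ⟨f, x, b⟩ => (f = e ∧ x ∈ e ∧ e ∉ failedSet E (χ b)) ∨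
      (χ b e = χ (!b) e ∧ e ∉ failedSet E (χ !b) ∧ ConflictsAt E (χ b) e f x)

variable {E χ}

theorem exists_charges {b : Bool} (he : e ∈ failedSet E (χ b)) (he' : e ∉ failedSet E (χ !b)) :
    ∃ t : Σ _ : Sym2 V, V × Bool,
      t.1 ∈ E ∧ χ false t.1 ≠ χ true t.1 ∧ t.2.1 ∈ t.1 ∧ Charges E χ e t := by
  have hchanged : ∀ {f}, χ b f ≠ χ (!b) f → χ false f ≠ χ true f := by
    cases b <;> simp [ne_comm]
  by_cases hχ : χ b e = χ (!b) e
  · obtain ⟨f, x, hf, hfχ⟩ := exists_conflictsAt he he' hχ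
    exact ⟨⟨f, x, b⟩, hf.1, hchanged hfχ, hf.2.2.2.1, .inr ⟨hχ, he', hf⟩⟩
  · exact ⟨⟨e, e.out.1, !b⟩, subset he, hchanged hχ, Sym2.out_fst_mem e,
      .inl ⟨rfl, Sym2.out_fst_mem e, he'⟩⟩

theorem Charges.eq {e' : Sym2 V} {t : Σ _ : Sym2 V, V × Bool} (h : Charges E χ e t)
    (h' : Charges E χ e' t) (he : e ∈ E) (he' : e' ∈ E) : e = e' := by
  obtain ⟨f, x, b⟩ := t
  rcases h with ⟨rfl, -, hnot⟩ | ⟨hχ, hnot, hconf⟩ <;>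
    rcases h' with ⟨rfl, -, hnot'⟩ | ⟨hχ', hnot', hconf'⟩
  · rfl
  · exact absurd ((hconf'.symm he').mem_failedSet hconf'.1) hnot
  · exact absurd ((hconf.symm he).mem_failedSet hconf.1) hnot'
  · by_contra hne
    exact hnot (((hconf.of_conflictsAt hconf' he' (Ne.symm hne)).congr hχ hχ').mem_failedSet he)

end Charging

end failedSet

open Finset failedSet in
theorem ncard_symmDiff_failedSet_le (E : Finset (Sym2 V)) (χ₁ χ₂ : Sym2 V → Option C) :
    (symmDiff (failedSet E χ₁) (failedSet E χ₂)).ncard ≤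
      4 * {e | e ∈ E ∧ χ₁ e ≠ χ₂ e}.ncard := by
  classical
  set χ : Bool → Sym2 V → Option C := fun b => bif b then χ₂ else χ₁
  set S := E.filter (· ∈ symmDiff (failedSet E χ₁) (failedSet E χ₂))
  set A := E.filter fun f => χ₁ f ≠ χ₂ f
  have hS : symmDiff (failedSet E χ₁) (failedSet E χ₂) = S := by
    ext e
    simp only [S, coe_filter, Set.mem_ofPred_eq, iff_and_self]
    exact fun he => symmDiff_subset he
  have hA : {e | e ∈ E ∧ χ₁ e ≠ χ₂ e} = A := by ext; simp [A]
  rw [hS, hA, Set.ncard_coe_finset, Set.ncard_coe_finset]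
  refine (card_le_card_of_forall_subsingleton (Charges E χ) (fun e he => ?_) ?_).trans
    (Sym2.card_sigma_toFinset_prod_le A)
  · obtain ⟨heE, he⟩ := mem_filter.1 he
    obtain ⟨b, h, h'⟩ : ∃ b, e ∈ failedSet E (χ b) ∧ e ∉ failedSet E (χ !b) := by
      rcases Set.mem_symmDiff.1 he with h | h
      exacts [⟨false, h⟩, ⟨true, h⟩]
    obtain ⟨t, htE, htχ, hx, ht⟩ := exists_charges h h'
    exact ⟨t, mem_sigma.2 ⟨mem_filter.2 ⟨htE, htχ⟩,
      mem_product.2 ⟨Sym2.mem_toFinset.2 hx, mem_univ _⟩⟩, ht⟩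
  · exact fun t _ e he e' he' => he.2.eq he'.2 (mem_filter.1 he.1).1 (mem_filter.1 he'.1).1

end

theorem stmt_2_general {V : Type*} [DecidableEq V] {C : Type*} (E : Finset (Sym2 V))
    (estar : Sym2 V) (hestar : estar ∉ E)
    (χ χ' : Sym2 V → Option C) :
    (symmDiff (failedSet (E : Set (Sym2 V)) χ)
        (failedSet ((insert estar E : Finset (Sym2 V)) : Set (Sym2 V)) χ')).ncard ≤
      4 * {e | e ∈ (insert estar E : Finset (Sym2 V)) ∧
            Function.update χ estar none e ≠ χ' e}.ncard + 1 := by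
  set E' : Finset (Sym2 V) := insert estar E
  have hfailed : failedSet E' (Function.update χ estar none) = insert estar (failedSet E χ) := by
    rw [Finset.coe_insert]
    exact failedSet.insert_update_none (by exact_mod_cast hestar)
  calc _ ≤ (insert estar (symmDiff (failedSet E' (Function.update χ estar none))
          (failedSet E' χ'))).ncard := by
        refine Set.ncard_le_ncard ?_ ((E'.finite_toSet.subset failedSet.symmDiff_subset).insert _)
        rw [hfailed]
        exact Set.symmDiff_subset_insert_symmDiff_insert _ _ _
    _ ≤ _ + 1 := Set.ncard_insert_le _ _
    _ ≤ _ := by grw [ncard_symmDiff_failedSet_le]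

/-- Let `e* ∉ E` be an edge and `E' := E ∪ {e*}`. Let `χ : E → C ∪ {⊥}` and
`χ' : E' → C ∪ {⊥}` be tentative colorings, let `χ̂ : E' → C ∪ {⊥}` extend `χ` by
`χ̂(e*) := ⊥`, and set `A := {e ∈ E' : χ̂(e) ≠ χ'(e)}`. Then
`|F(E, χ) ⊕ F(E', χ')| ≤ 4·|A| + 1`. -/
theorem stmt_2 {V : Type*} [DecidableEq V] {C : Type*} (E : Finset (Sym2 V))
    (hE : ∀ e ∈ E, ¬ e.IsDiag)
    (estar : Sym2 V) (hestar : estar ∉ E) (hestar' : ¬ estar.IsDiag)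
    (χ χ' : Sym2 V → Option C) :
    (symmDiff (failedSet (E : Set (Sym2 V)) χ)
        (failedSet ((insert estar E : Finset (Sym2 V)) : Set (Sym2 V)) χ')).ncard ≤
      4 * {e | e ∈ (insert estar E : Finset (Sym2 V)) ∧
            Function.update χ estar none e ≠ χ' e}.ncard + 1 :=
  stmt_2_general E estar hestar χ χ'
end

section
/- For every integer i with 1 ≤ i ≤ T, one has (1 − ε²)(1 − ε)^{2(i−1)} ≥ ε²(1 + ε)/8. -/
/-!
Since `(1 - ε²)(1 - ε)^(2(i-1)) = (1 + ε)(1 - ε)^m` with `m = 2i - 1`, it suffices to show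
`ε²/8 ≤ (1 - ε)^m`, which we compare on the log scale. By `log x ≥ 1 - 1/x`,
`log (1 - ε) ≥ -ε/(1 - ε)`, and `i ≤ T` gives `(m + 1) ε ≤ -2 log ε`. The loss from the factor
`1/(1 - ε)` is absorbed by `-ε log ε ≤ 1 - ε` (the same inequality at `x = ε`) and `2 < log 8`.
-/

open Real

lemma two_lt_log_eight : 2 < log 8 := by
  have h : log 8 = 3 * log 2 := by
    rw [show (8 : ℝ) = 2 ^ 3 by norm_num, log_pow]
    norm_num
  linarith [log_two_gt_d9]

lemma neg_div_one_sub_le_log_one_sub {ε : ℝ} (hε : ε < 1) : -(ε / (1 - ε)) ≤ log (1 - ε) := by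
  have h := one_sub_inv_le_log_of_pos (sub_pos.mpr hε)
  have h' : 1 - (1 - ε)⁻¹ = -(ε / (1 - ε)) := by
    field_simp [(sub_pos.mpr hε).ne']
    ring
  rwa [h'] at h

lemma sub_one_le_mul_log {ε : ℝ} (hε : 0 < ε) : ε - 1 ≤ ε * log ε := by
  have h := mul_le_mul_of_nonneg_left (one_sub_inv_le_log_of_pos hε) hε.le
  rwa [mul_sub, mul_one, mul_inv_cancel₀ hε.ne'] at h

lemma sq_div_eight_le_one_sub_pow {ε : ℝ} (hε0 : 0 < ε) (hε1 : ε < 1) {m : ℕ}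
    (hm : (m + 1) * ε ≤ -2 * log ε) : ε ^ 2 / 8 ≤ (1 - ε) ^ m := by
  have hδ : 0 < 1 - ε := sub_pos.mpr hε1
  rw [← log_le_log_iff (by positivity) (pow_pos hδ m), log_div (by positivity) (by norm_num),
    log_pow, log_pow]
  have hu : -(m * ε) ≤ m * log (1 - ε) * (1 - ε) := by
    have := mul_le_mul_of_nonneg_left (neg_div_one_sub_le_log_one_sub hε1) (Nat.cast_nonneg m)
    rwa [mul_neg, mul_div_assoc', ← neg_div, div_le_iff₀ hδ] at this
  have hℓ := sub_one_le_mul_log hε0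
  have h8 := two_lt_log_eight
  have key : (2 * log ε - log 8) * (1 - ε) ≤ m * log (1 - ε) * (1 - ε) := by
    nlinarith
  push_cast
  exact le_of_mul_le_mul_right key hδ

/-- If `0 < ε ≤ 1/10` and `T := ⌊(1/ε)·ln(1/ε)⌋`, then for every integer `i` with
`1 ≤ i ≤ T` one has `(1 − ε²)(1 − ε)^{2(i−1)} ≥ ε²(1 + ε)/8`. -/
theorem stmt_8 (ε : ℝ) (hε0 : 0 < ε) (hε1 : ε ≤ 1 / 10)
    (T : ℕ) (hT : T = ⌊(1 / ε) * Real.log (1 / ε)⌋₊) :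
    ∀ i : ℕ, 1 ≤ i → i ≤ T →
      (1 - ε ^ 2) * (1 - ε) ^ (2 * (i - 1)) ≥ ε ^ 2 * (1 + ε) / 8 := by
  intro i hi hiT
  obtain ⟨j, rfl⟩ := Nat.exists_eq_add_of_le' hi
  have hL : 0 ≤ log (1 / ε) := log_nonneg (by rw [le_div_iff₀ hε0]; linarith)
  have hiε : ((j + 1 : ℕ) : ℝ) * ε ≤ -log ε := by
    have hiT' : ((j + 1 : ℕ) : ℝ) ≤ 1 / ε * log (1 / ε) :=
      (Nat.cast_le.mpr (hT ▸ hiT)).trans (Nat.floor_le (mul_nonneg (by positivity) hL))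
    rwa [one_div, log_inv, ← div_eq_inv_mul, le_div_iff₀ hε0] at hiT'
  have hpow : ε ^ 2 / 8 ≤ (1 - ε) ^ (2 * j + 1) :=
    sq_div_eight_le_one_sub_pow hε0 (by linarith) (by push_cast at hiε ⊢; linarith)
  rw [Nat.add_sub_cancel, ge_iff_le,
    show (1 - ε ^ 2) * (1 - ε) ^ (2 * j) = (1 + ε) * (1 - ε) ^ (2 * j + 1) by ring]
  calc ε ^ 2 * (1 + ε) / 8 = (1 + ε) * (ε ^ 2 / 8) := by ring
    _ ≤ (1 + ε) * (1 - ε) ^ (2 * j + 1) := mul_le_mul_of_nonneg_left hpow (by linarith)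
end

section
/- If Δ ≥ 100·ln(n)/ε⁴ and n ≥ ε^{−2}, then with probability at least 1 − 1/n^{14}, simultaneously for every vertex u ∈ V and every i ∈ {1, …, T}: |{e ∈ N(u) : X_e = i}| < (ε + ε²)(1 − ε)^{i−1}·Δ. -/
/-
For a vertex `u` and a round `i ≤ T`, the number of edges at `u` with `X_e = i` is a sum of at
most `Δ` independent indicators of mean `p = ε(1-ε)^(i-1)`. The exponential-moment bound with
parameter `t = ε` gives `P[count ≥ (1+ε)pΔ] ≤ exp(pΔ(e^ε - 1 - ε - ε²)) ≤ exp(-(9/20)ε²pΔ)`.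
Since `i - 1 ≤ T ≤ ε⁻¹ ln ε⁻¹` and `ln(1-ε) ≥ -ε/(1-ε)`, we have `(1-ε)^(i-1) ≥ ε/e`, so
`pΔ ≥ ε²Δ/e ≥ 100 ln n/(e ε²)` and each bad event has probability at most
`exp(-(45/e) ln n) ≤ n⁻¹⁶`. A union bound over the `nT ≤ n²` pairs `(u, i)` finishes.
-/

open MeasureTheory ProbabilityTheory Real Finset

theorem exp_le_one_add_add_sq {x : ℝ} (hx0 : 0 ≤ x) (hx : x ≤ 1 / 5) :
    exp x ≤ 1 + x + 11 / 20 * x ^ 2 := by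
  have h := exp_bound' hx0 (by linarith) (n := 3) (by norm_num)
  norm_num [Finset.sum_range_succ, Nat.factorial] at h
  nlinarith

theorem one_div_mul_log_one_div_le {ε : ℝ} (hε0 : 0 < ε) :
    1 / ε * log (1 / ε) ≤ 1 / ε ^ 2 := by
  have hlog : log (1 / ε) ≤ 1 / ε := by linarith [log_le_sub_one_of_pos (one_div_pos.mpr hε0)]
  calc 1 / ε * log (1 / ε) ≤ 1 / ε * (1 / ε) := by gcongr
    _ = 1 / ε ^ 2 := by ring

theorem mul_exp_neg_one_le_one_sub_pow {ε : ℝ} (hε0 : 0 < ε) (hε1 : ε < 1) {T : ℕ}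
    (hT : (T : ℝ) ≤ 1 / ε * log (1 / ε)) :
    ε * exp (-1) ≤ (1 - ε) ^ T := by
  have hε1' : 0 < 1 - ε := by linarith
  set L := log (1 / ε)
  have hlog_one_sub : -(ε / (1 - ε)) ≤ log (1 - ε) := by
    have := one_sub_inv_le_log_of_pos hε1'
    rwa [show 1 - (1 - ε)⁻¹ = -(ε / (1 - ε)) by field_simp; ring] at this
  have hεL : ε * L ≤ 1 - ε := by
    have := mul_le_mul_of_nonneg_left (log_le_sub_one_of_pos (one_div_pos.mpr hε0)) hε0.le
    rwa [mul_sub, mul_one_div_cancel hε0.ne', mul_one] at this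
  have hTε : T * ε ≤ L := by
    rwa [one_div_mul_eq_div, le_div_iff₀ hε0] at hT
  have hexponent : log ε - 1 ≤ T * log (1 - ε) := by
    have hlogε : log ε = -L := by simp only [L, one_div, log_inv, neg_neg]
    have hL : L / (1 - ε) ≤ L + 1 := by rw [div_le_iff₀ hε1']; nlinarith
    calc log ε - 1 ≤ -(L / (1 - ε)) := by rw [hlogε]; linarith
      _ ≤ -(T * ε / (1 - ε)) := by gcongr
      _ = T * -(ε / (1 - ε)) := by ring
      _ ≤ T * log (1 - ε) := by gcongr
  calc ε * exp (-1) = exp (log ε - 1) := by rw [exp_sub, exp_log hε0, exp_neg]; ring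
    _ ≤ exp (T * log (1 - ε)) := exp_le_exp.mpr hexponent
    _ = (1 - ε) ^ T := by rw [← log_pow, exp_log (pow_pos hε1' T)]

theorem exp_mul_indicator_one_comp {Ω β : Type*} (Y : Ω → β) (A : Set β) (t : ℝ) :
    (fun ω ↦ exp (t * A.indicator 1 (Y ω))) =
      fun ω ↦ (Y ⁻¹' A).indicator (fun _ ↦ exp t - 1) ω + 1 := by
  ext ω
  by_cases h : Y ω ∈ A <;> simp [h]

section Chernoff

variable {Ω ι β : Type*} [MeasurableSpace Ω] {μ : Measure Ω} [IsProbabilityMeasure μ]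
  [MeasurableSpace β]

theorem integrable_exp_mul_indicator_one_comp {Y : Ω → β} (hY : Measurable Y) {A : Set β}
    (hA : MeasurableSet A) (t : ℝ) : Integrable (fun ω ↦ exp (t * A.indicator 1 (Y ω))) μ := by
  rw [exp_mul_indicator_one_comp]
  exact ((integrable_const _).indicator (hY hA)).add (integrable_const 1)

theorem mgf_indicator_one_comp_le {Y : Ω → β} (hY : Measurable Y) {A : Set β}
    (hA : MeasurableSet A) {p t : ℝ} (hp : μ.real (Y ⁻¹' A) ≤ p) (ht : 0 ≤ t) :
    mgf (fun ω ↦ A.indicator 1 (Y ω)) μ t ≤ exp (p * (exp t - 1)) := by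
  have hexp_t : 0 ≤ exp t - 1 := by linarith [one_le_exp ht]
  calc mgf (fun ω ↦ A.indicator 1 (Y ω)) μ t = μ.real (Y ⁻¹' A) * (exp t - 1) + 1 := by
        rw [mgf, exp_mul_indicator_one_comp, integral_add
          ((integrable_const _).indicator (hY hA)) (integrable_const _),
          integral_indicator_const _ (hY hA)]
        simp [mul_comm]
    _ ≤ p * (exp t - 1) + 1 := by gcongr
    _ ≤ exp (p * (exp t - 1)) := by linarith [add_one_le_exp (p * (exp t - 1))]

theorem measureReal_card_filter_ge_le_exp {Y : ι → Ω → β} (hindep : iIndepFun Y μ)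
    (hmeas : ∀ j, Measurable (Y j)) {A : Set β} [DecidablePred (· ∈ A)] (hA : MeasurableSet A)
    (s : Finset ι) {p m t : ℝ} (hp0 : 0 ≤ p) (hp : ∀ j ∈ s, μ.real (Y j ⁻¹' A) ≤ p)
    (hm : (#s : ℝ) ≤ m) (ht : 0 ≤ t) (a : ℝ) :
    μ.real {ω | a ≤ #{j ∈ s | Y j ω ∈ A}} ≤ exp (-t * a + m * p * (exp t - 1)) := by
  set Z : ι → Ω → ℝ := fun j ω ↦ A.indicator 1 (Y j ω)
  have hZmeas : ∀ j, Measurable (Z j) := fun j ↦ (measurable_const.indicator hA).comp (hmeas j)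
  have hZindep : iIndepFun Z μ :=
    hindep.comp (fun _ ↦ A.indicator 1) (fun _ ↦ measurable_const.indicator hA)
  have hcount : ∀ ω, (#{j ∈ s | Y j ω ∈ A} : ℝ) = (∑ j ∈ s, Z j) ω := by
    intro ω
    simp [Z, Finset.sum_apply, Set.indicator_apply, Finset.sum_boole]
  have hint : Integrable (fun ω ↦ exp (t * (∑ j ∈ s, Z j) ω)) μ :=
    hZindep.integrable_exp_mul_sum hZmeas fun j _ ↦
      integrable_exp_mul_indicator_one_comp (hmeas j) hA t
  calc μ.real {ω | a ≤ #{j ∈ s | Y j ω ∈ A}} = μ.real {ω | a ≤ (∑ j ∈ s, Z j) ω} := by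
        simp_rw [hcount]
    _ ≤ exp (-t * a) * mgf (∑ j ∈ s, Z j) μ t := measure_ge_le_exp_mul_mgf a ht hint
    _ ≤ exp (-t * a) * ∏ j ∈ s, exp (p * (exp t - 1)) := by
        rw [hZindep.mgf_sum hZmeas]
        gcongr with j hj
        · exact fun _ _ ↦ mgf_nonneg
        · exact mgf_indicator_one_comp_le (hmeas j) hA (hp j hj) ht
    _ ≤ exp (-t * a + m * p * (exp t - 1)) := by
        have hexp_t : 0 ≤ exp t - 1 := by linarith [one_le_exp ht]
        rw [prod_const, ← exp_nat_mul, ← exp_add]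
        refine exp_le_exp.mpr (add_le_add_right ?_ _)
        nlinarith [mul_nonneg hp0 hexp_t]

end Chernoff

theorem ofReal_one_sub_card_mul_le_measure {Ω ι : Type*} [MeasurableSpace Ω] {μ : Measure Ω}
    [IsProbabilityMeasure μ] (S : Finset ι) (E : ι → Set Ω) {q : ℝ} (hq : 0 ≤ q)
    (hE : ∀ j ∈ S, μ (E j) ≤ ENNReal.ofReal q) :
    ENNReal.ofReal (1 - #S * q) ≤ μ {ω | ∀ j ∈ S, ω ∉ E j} := by
  have hunion : μ (⋃ j ∈ S, E j) ≤ ENNReal.ofReal (#S * q) :=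
    calc μ (⋃ j ∈ S, E j) ≤ ∑ j ∈ S, μ (E j) := measure_biUnion_finset_le S E
      _ ≤ ∑ _j ∈ S, ENNReal.ofReal q := sum_le_sum hE
      _ = ENNReal.ofReal (#S * q) := by
        rw [sum_const, nsmul_eq_mul, ENNReal.ofReal_mul (by positivity), ENNReal.ofReal_natCast]
  have hcompl : {ω | ∀ j ∈ S, ω ∉ E j} = (⋃ j ∈ S, E j)ᶜ := by ext; simp
  calc ENNReal.ofReal (1 - #S * q) = 1 - ENNReal.ofReal (#S * q) := by
        rw [ENNReal.ofReal_sub _ (by positivity), ENNReal.ofReal_one]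
    _ ≤ 1 - μ (⋃ j ∈ S, E j) := tsub_le_tsub_left hunion 1
    _ ≤ μ {ω | ∀ j ∈ S, ω ∉ E j} := by
        rw [hcompl, tsub_le_iff_left, ← measure_univ (μ := μ)]
        exact measure_univ_le_add_compl _

theorem exp_chernoff_exponent_le {ε Δ q : ℝ} {n : ℕ} (hε0 : 0 < ε) (hε1 : ε ≤ 1 / 5)
    (hn : 1 ≤ n) (hΔ : 100 * log n ≤ ε ^ 4 * Δ) (hq : ε * exp (-1) ≤ q) :
    exp (-ε * ((ε + ε ^ 2) * q * Δ) + Δ * (ε * q) * (exp ε - 1)) ≤ 1 / (n : ℝ) ^ 16 := by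
  have hlogn : 0 ≤ log n := log_nonneg (by exact_mod_cast hn)
  have hΔ0 : 0 ≤ Δ := nonneg_of_mul_nonneg_right (a := ε ^ 4) (by linarith) (by positivity)
  have hq0 : 0 ≤ q := le_trans (by positivity) hq
  have he : 16 * exp 1 ≤ 45 := by linarith [exp_one_lt_d9]
  have hexp := exp_le_one_add_add_sq hε0.le hε1
  have hexponent : -ε * ((ε + ε ^ 2) * q * Δ) + Δ * (ε * q) * (exp ε - 1) ≤ -(16 * log n) :=
    calc -ε * ((ε + ε ^ 2) * q * Δ) + Δ * (ε * q) * (exp ε - 1)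
        = Δ * ε * q * (exp ε - 1 - ε - ε ^ 2) := by ring
      _ ≤ Δ * ε * q * (-(9 / 20 * ε ^ 2)) := by gcongr; linarith
      _ ≤ Δ * ε * (ε * exp (-1)) * (-(9 / 20 * ε ^ 2)) := by
        apply mul_le_mul_of_nonpos_right _ (by nlinarith); gcongr
      _ = -(9 / 20 * (ε ^ 4 * Δ) * exp (-1)) := by ring
      _ ≤ -(9 / 20 * (100 * log n) * exp (-1)) := by gcongr
      _ ≤ -(16 * log n) := by
        rw [exp_neg, ← div_eq_mul_inv, neg_le_neg_iff, le_div_iff₀ (exp_pos 1)]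
        nlinarith
  calc exp (-ε * ((ε + ε ^ 2) * q * Δ) + Δ * (ε * q) * (exp ε - 1)) ≤ exp (-(16 * log n)) :=
        exp_le_exp.mpr hexponent
    _ = 1 / (n : ℝ) ^ 16 := by
        rw [← Nat.cast_ofNat, ← log_pow, exp_neg, exp_log (by positivity), one_div]

namespace SimpleGraph

variable {V : Type*} [Fintype V] [DecidableEq V] (G : SimpleGraph V) [DecidableRel G.Adj]

theorem ncard_incidenceSet_and_eq_card_filter (u : V) (P : Sym2 V → Prop) [DecidablePred P] :
    {e | e ∈ G.incidenceSet u ∧ P e}.ncard =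
      #(((G.incidenceFinset u).subtype (· ∈ G.edgeSet)).filter fun e : G.edgeSet ↦ P e) := by
  have : {e | e ∈ G.incidenceSet u ∧ P e} = Subtype.val ''
      (((G.incidenceFinset u).subtype (· ∈ G.edgeSet)).filter fun e : G.edgeSet ↦ P e :
        Set G.edgeSet) := by
    ext e
    simpa using fun he _ ↦ G.incidenceSet_subset u he
  rw [this, Set.ncard_image_of_injective _ Subtype.val_injective, Set.ncard_coe_finset]

theorem card_subtype_incidenceFinset (u : V) :
    #((G.incidenceFinset u).subtype (· ∈ G.edgeSet)) = G.degree u := by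
  rw [card_subtype, filter_true_of_mem fun e he ↦ G.incidenceSet_subset u (by simpa using he),
    card_incidenceFinset_eq_degree]

theorem measureReal_ncard_incidenceSet_ge_le_exp {Ω β : Type*} [MeasurableSpace Ω]
    {μ : Measure Ω} [IsProbabilityMeasure μ] [MeasurableSpace β] [MeasurableSingletonClass β]
    {X : Sym2 V → Ω → β} (hmeas : ∀ e, Measurable (X e))
    (hindep : iIndepFun (fun e : G.edgeSet ↦ X e) μ) {u : V} {Δ : ℝ}
    (hdeg : (G.degree u : ℝ) ≤ Δ) (b : β) {p t : ℝ} (hp0 : 0 ≤ p)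
    (hp : ∀ e ∈ G.edgeSet, μ.real {ω | X e ω = b} ≤ p) (ht : 0 ≤ t) (a : ℝ) :
    μ.real {ω | a ≤ {e | e ∈ G.incidenceSet u ∧ X e ω = b}.ncard} ≤
      exp (-t * a + Δ * p * (exp t - 1)) := by
  classical
  have hcard : (#((G.incidenceFinset u).subtype (· ∈ G.edgeSet)) : ℝ) ≤ Δ := by
    rwa [card_subtype_incidenceFinset]
  convert measureReal_card_filter_ge_le_exp hindep (fun e ↦ hmeas e) (measurableSet_singleton b)
    _ hp0 (fun e _ ↦ hp e e.2) hcard ht a using 5 with ω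
  rw [ncard_incidenceSet_and_eq_card_filter]
  simp

theorem measure_ncard_incidenceSet_ge_le {Ω : Type*} [MeasurableSpace Ω] {μ : Measure Ω}
    [IsProbabilityMeasure μ] {X : Sym2 V → Ω → ℕ} (hmeas : ∀ e, Measurable (X e))
    (hindep : iIndepFun (fun e : G.edgeSet ↦ X e) μ) {ε Δ : ℝ} {T n i : ℕ} (hε0 : 0 < ε)
    (hε1 : ε ≤ 1 / 5) (hT : (T : ℝ) ≤ 1 / ε * log (1 / ε)) (hn : 1 ≤ n)
    (hΔ : 100 * log n ≤ ε ^ 4 * Δ) {u : V} (hdeg : (G.degree u : ℝ) ≤ Δ) (hiT : i ≤ T)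
    (hdist : ∀ e ∈ G.edgeSet, μ {ω | X e ω = i} = ENNReal.ofReal (ε * (1 - ε) ^ (i - 1))) :
    μ {ω | (ε + ε ^ 2) * (1 - ε) ^ (i - 1) * Δ ≤ {e | e ∈ G.incidenceSet u ∧ X e ω = i}.ncard} ≤
      ENNReal.ofReal (1 / (n : ℝ) ^ 16) := by
  have hp0 : 0 ≤ ε * (1 - ε) ^ (i - 1) := mul_nonneg hε0.le (pow_nonneg (by linarith) _)
  have hq : ε * exp (-1) ≤ (1 - ε) ^ (i - 1) :=
    (mul_exp_neg_one_le_one_sub_pow hε0 (by linarith) hT).trans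
      (pow_le_pow_of_le_one (by linarith) (by linarith) (by omega))
  rw [ENNReal.le_ofReal_iff_toReal_le (measure_ne_top _ _) (by positivity)]
  refine (G.measureReal_ncard_incidenceSet_ge_le_exp hmeas hindep hdeg i hp0 (fun e he ↦ ?_)
    hε0.le _).trans (exp_chernoff_exponent_le hε0 hε1 hn hΔ hq)
  rw [measureReal_def, hdist e he, ENNReal.toReal_ofReal hp0]

end SimpleGraph

theorem stmt_10_general {V : Type*} [Fintype V]
    (G : SimpleGraph V) [DecidableRel G.Adj]
    {Ω : Type*} [MeasurableSpace Ω] (μ : Measure Ω) [IsProbabilityMeasure μ]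
    (ε Δ : ℝ) (hε0 : 0 < ε) (hε1 : ε ≤ 1 / 10)
    (T : ℕ) (hT : T = ⌊(1 / ε) * Real.log (1 / ε)⌋₊)
    (n : ℕ) (hn : n = Fintype.card V)
    (hdeg : ∀ u : V, (G.degree u : ℝ) ≤ Δ)
    (hΔ : Δ ≥ 100 * Real.log n / ε ^ 4)
    (hnε : (n : ℝ) ≥ 1 / ε ^ 2)
    (X : Sym2 V → Ω → ℕ)
    (hmeas : ∀ e, Measurable (X e))
    (hindep : iIndepFun
      (fun e : G.edgeSet => X e) μ)
    (hdist : ∀ e ∈ G.edgeSet, ∀ i : ℕ, 1 ≤ i → i ≤ T →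
      μ {ω | X e ω = i} = ENNReal.ofReal (ε * (1 - ε) ^ (i - 1))) :
    ENNReal.ofReal (1 - 1 / (n : ℝ) ^ 14) ≤
      μ {ω | ∀ u : V, ∀ i : ℕ, 1 ≤ i → i ≤ T →
        (({e | e ∈ G.incidenceSet u ∧ X e ω = i}.ncard : ℝ)) <
          (ε + ε ^ 2) * (1 - ε) ^ (i - 1) * Δ} := by
  classical
  have hn1 : (1 : ℝ) ≤ n := le_trans (by rw [le_div_iff₀ (by positivity)]; nlinarith) hnε
  have hTε : (T : ℝ) ≤ 1 / ε * log (1 / ε) := hT ▸ Nat.floor_le (by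
    have := log_nonneg (show 1 ≤ 1 / ε by rw [le_div_iff₀ hε0]; linarith); positivity)
  have hTn : (T : ℝ) ≤ n := hTε.trans ((one_div_mul_log_one_div_le hε0).trans hnε)
  have hΔ' : 100 * log n ≤ ε ^ 4 * Δ := by rwa [ge_iff_le, div_le_iff₀' (by positivity)] at hΔ
  set bad : V × ℕ → Set Ω := fun j ↦
    {ω | (ε + ε ^ 2) * (1 - ε) ^ (j.2 - 1) * Δ ≤ {e | e ∈ G.incidenceSet j.1 ∧ X e ω = j.2}.ncard}
  have hbad : ∀ j ∈ univ ×ˢ Icc 1 T, μ (bad j) ≤ ENNReal.ofReal (1 / (n : ℝ) ^ 16) := by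
    rintro ⟨u, i⟩ hj
    obtain ⟨hi1, hiT⟩ : 1 ≤ i ∧ i ≤ T := by simpa using hj
    exact G.measure_ncard_incidenceSet_ge_le hmeas hindep hε0 (by linarith) hTε
      (by exact_mod_cast hn1) hΔ' (hdeg u) hiT fun e he ↦ hdist e he i hi1 hiT
  have hcard : (#((univ : Finset V) ×ˢ Icc 1 T) : ℝ) * (1 / (n : ℝ) ^ 16) ≤ 1 / (n : ℝ) ^ 14 := by
    rw [card_product, card_univ, ← hn, Nat.card_Icc, Nat.add_sub_cancel, Nat.cast_mul]
    calc (n : ℝ) * T * (1 / (n : ℝ) ^ 16) ≤ n * n * (1 / (n : ℝ) ^ 16) := by gcongr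
      _ = 1 / (n : ℝ) ^ 14 := by field_simp
  calc ENNReal.ofReal (1 - 1 / (n : ℝ) ^ 14)
      ≤ ENNReal.ofReal (1 - #(univ ×ˢ Icc 1 T) * (1 / (n : ℝ) ^ 16)) :=
        ENNReal.ofReal_le_ofReal (by linarith)
    _ ≤ μ {ω | ∀ j ∈ univ ×ˢ Icc 1 T, ω ∉ bad j} :=
        ofReal_one_sub_card_mul_le_measure _ bad (by positivity) hbad
    _ ≤ _ := by
        refine measure_mono fun ω hω u i hi1 hiT ↦ not_le.mp ?_
        exact hω (u, i) (by simp [hi1, hiT])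

/-- Let `G` be a finite simple graph on `n` vertices with maximum degree at most `Δ`,
`0 < ε ≤ 1/10`, `T := ⌊(1/ε)·ln(1/ε)⌋`, and let `(X_e)_{e ∈ E}` be independent random
rounds, each with the capped geometric distribution on `{1, …, T+1}`
(`P[X_e = i] = ε(1−ε)^{i−1}` for `1 ≤ i ≤ T`, `P[X_e = T+1] = (1−ε)^T`).
If `Δ ≥ 100·ln(n)/ε⁴` and `n ≥ ε^{−2}`, then with probability at least `1 − 1/n^{14}`,
simultaneously for every vertex `u` and every `i ∈ {1, …, T}`,
`|{e ∈ N(u) : X_e = i}| < (ε + ε²)(1 − ε)^{i−1}·Δ`. -/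
theorem stmt_10 {V : Type*} [Fintype V] [DecidableEq V]
    (G : SimpleGraph V) [DecidableRel G.Adj]
    {Ω : Type*} [MeasurableSpace Ω] (μ : Measure Ω) [IsProbabilityMeasure μ]
    (ε Δ : ℝ) (hε0 : 0 < ε) (hε1 : ε ≤ 1 / 10)
    (T : ℕ) (hT : T = ⌊(1 / ε) * Real.log (1 / ε)⌋₊)
    (n : ℕ) (hn : n = Fintype.card V)
    (hdeg : ∀ u : V, (G.degree u : ℝ) ≤ Δ)
    (hΔ : Δ ≥ 100 * Real.log n / ε ^ 4)
    (hnε : (n : ℝ) ≥ 1 / ε ^ 2)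
    (X : Sym2 V → Ω → ℕ)
    (hmeas : ∀ e, Measurable (X e))
    (hindep : iIndepFun
      (fun e : G.edgeSet => X e) μ)
    (hdist : ∀ e ∈ G.edgeSet, ∀ i : ℕ, 1 ≤ i → i ≤ T →
      μ {ω | X e ω = i} = ENNReal.ofReal (ε * (1 - ε) ^ (i - 1)))
    (hdistT : ∀ e ∈ G.edgeSet, μ {ω | X e ω = T + 1} = ENNReal.ofReal ((1 - ε) ^ T)) :
    ENNReal.ofReal (1 - 1 / (n : ℝ) ^ 14) ≤
      μ {ω | ∀ u : V, ∀ i : ℕ, 1 ≤ i → i ≤ T →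
        (({e | e ∈ G.incidenceSet u ∧ X e ω = i}.ncard : ℝ)) <
          (ε + ε ^ 2) * (1 - ε) ^ (i - 1) * Δ} :=
  stmt_10_general G μ ε Δ hε0 hε1 T hT n hn hdeg hΔ hnε X hmeas hindep hdist
end

section
/- For every vertex u ∈ V and every integer g ≥ 1, the probability that the g-neighborhood of u in G' contains a cycle is at most 3·D^{5g}/Δ. -/
open MeasureTheory ProbabilityTheory

/-- The random subgraph of `G` determined by keeping the edges `e` with `B e ω = true`. -/
def keptSubgraph {V : Type*} {Ω : Type*} (G : SimpleGraph V) (B : Sym2 V → Ω → Bool)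
    (ω : Ω) : SimpleGraph V :=
  SimpleGraph.fromEdgeSet {e | e ∈ G.edgeSet ∧ B e ω = true}

/-- The `g`-neighborhood of `x` in `H` (the subgraph of `H` induced on the vertices at
`H`-distance at most `g` from `x`) contains a cycle. -/
def ballHasCycle {V : Type*} (H : SimpleGraph V) (x : V) (g : ℕ) : Prop :=
  ¬ (SimpleGraph.induce {v | H.Reachable x v ∧ H.dist x v ≤ g} H).IsAcyclic

/-! If the `g`-ball around `u` in `G'` contains a cycle, let `x` be a vertex of that cycle
farthest from `u`. Its two neighbours on the cycle are no farther from `u`, and shortest walks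
from `u` to them (entering `x` through one neighbour if both lie a level below `x`) close up,
through an edge at `x` that they avoid, to a cycle through `x` of length at most `2g + 1`.
A shortest walk from `u` to the vertex of this cycle nearest to `u` meets the cycle only in its
end, so following it and then going once around the cycle gives a *lollipop*: a walk from `u`
of length `p + c` with distinct edges that ends at its `p`-th vertex, where `p ≤ g` and
`1 ≤ c ≤ 2g + 1`.

The last vertex of a lollipop is forced, so `G` has at most `Δ^(p+c-1)` of them, and by
independence each survives in `G'` with probability `(D/Δ)^(p+c)`. The union bound gives
`∑_{p ≤ g, c ≤ 2g+1} D^(p+c)/Δ ≤ (g+1)(2g+1) D^(3g+1)/Δ ≤ 3 D^(5g)/Δ`. -/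

namespace SimpleGraph

variable {V : Type*} {H : SimpleGraph V} {u w x y a b z : V}

theorem Walk.dist_lt_of_mem_support {P : H.Walk u w} (hP : P.length = H.dist u w)
    (hx : x ∈ P.support) (hxw : x ≠ w) : H.dist u x < H.dist u w := by
  classical
  rw [← length_eq_dist_of_subwalk hP (P.isSubwalk_takeUntil hx), ← hP]
  exact P.length_takeUntil_lt_length hx hxw

theorem exists_isCycle_of_adj_of_notMem_edges (hxy : H.Adj x y) (Px : H.Walk u x)
    (Py : H.Walk u y) (hx : s(x, y) ∉ Px.edges) (hy : s(x, y) ∉ Py.edges) :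
    ∃ C : H.Walk x x, C.IsCycle ∧ C.length ≤ Px.length + Py.length + 1 := by
  classical
  let Q := (Py.reverse.append Px).bypass
  refine ⟨.cons hxy Q,
    (Walk.cons_isCycle_iff Q hxy).2 ⟨Walk.bypass_isPath _, fun h => ?_⟩, ?_⟩
  · have := Walk.edges_bypass_subset_edges _ h
    simp only [Walk.edges_append, Walk.edges_reverse, List.mem_append, List.mem_reverse] at this
    tauto
  · have : Q.length ≤ Py.length + Px.length := by
      simpa using Walk.length_bypass_le_length (Py.reverse.append Px)
    rw [Walk.length_cons]
    omega

theorem exists_isCycle_of_adj_of_dist_eq (hx : H.Reachable u x) (hxy : H.Adj x y)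
    (hd : H.dist u y = H.dist u x) :
    ∃ C : H.Walk x x, C.IsCycle ∧ C.length ≤ 2 * H.dist u x + 1 := by
  obtain ⟨Px, hPx⟩ := hx.exists_walk_length_eq_dist
  obtain ⟨Py, hPy⟩ := (hx.trans hxy.reachable).exists_walk_length_eq_dist
  obtain ⟨C, hC, hlen⟩ := exists_isCycle_of_adj_of_notMem_edges hxy Px Py
    (fun h => (Px.dist_lt_of_mem_support hPx (Px.snd_mem_support_of_mem_edges h)
      hxy.ne').ne hd)
    (fun h => (Py.dist_lt_of_mem_support hPy (Py.fst_mem_support_of_mem_edges h)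
      hxy.ne).ne hd.symm)
  exact ⟨C, hC, by omega⟩

theorem exists_isCycle_of_adj_of_adj (hx : H.Reachable u x) (hab : a ≠ b) (ha : H.Adj x a)
    (hb : H.Adj x b) (hda : H.dist u a ≤ H.dist u x) (hdb : H.dist u b ≤ H.dist u x) :
    ∃ C : H.Walk x x, C.IsCycle ∧ C.length ≤ 2 * H.dist u x + 1 := by
  rcases hda.eq_or_lt with hda | hda
  · exact exists_isCycle_of_adj_of_dist_eq hx ha hda
  rcases hdb.eq_or_lt with hdb | hdb
  · exact exists_isCycle_of_adj_of_dist_eq hx hb hdb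
  -- both neighbours are one level below `x`: enter `x` through `a`, leave it towards `b`
  obtain ⟨Pa, hPa⟩ := (hx.trans ha.reachable).exists_walk_length_eq_dist
  obtain ⟨Pb, hPb⟩ := (hx.trans hb.reachable).exists_walk_length_eq_dist
  have hxPa : x ∉ Pa.support := fun h => (Pa.dist_lt_of_mem_support hPa h ha.ne).not_gt hda
  have hxPb : x ∉ Pb.support := fun h => (Pb.dist_lt_of_mem_support hPb h hb.ne).not_gt hdb
  obtain ⟨C, hC, hlen⟩ := exists_isCycle_of_adj_of_notMem_edges hb (Pa.concat ha.symm) Pb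
    (fun h => by
      rw [Walk.edges_concat, List.concat_eq_append, List.mem_append, List.mem_singleton,
        Sym2.eq_iff] at h
      rcases h with h | ⟨h, -⟩ | ⟨-, h⟩
      · exact hxPa (Pa.fst_mem_support_of_mem_edges h)
      · exact ha.ne h
      · exact hab h.symm)
    (fun h => hxPb (Pb.fst_mem_support_of_mem_edges h))
  refine ⟨C, hC, ?_⟩
  rw [Walk.length_concat] at hlen
  omega

theorem exists_isCycle_of_ballHasCycle {g : ℕ} (h : ballHasCycle H u g) :
    ∃ x, H.Reachable u x ∧ H.dist u x ≤ g ∧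
      ∃ C : H.Walk x x, C.IsCycle ∧ C.length ≤ 2 * g + 1 := by
  classical
  simp only [ballHasCycle, IsAcyclic, not_forall, not_not] at h
  obtain ⟨v, C₀, hC₀⟩ := h
  let C := C₀.map (Embedding.induce {v | H.Reachable u v ∧ H.dist u v ≤ g}).toHom
  have hC : C.IsCycle := hC₀.map Subtype.val_injective
  have hCball : ∀ w ∈ C.support, H.Reachable u w ∧ H.dist u w ≤ g := by
    intro w hw
    rw [Walk.support_map, List.mem_map] at hw
    obtain ⟨w', -, rfl⟩ := hw
    exact w'.2
  obtain ⟨x, hxC, hmax⟩ := C.support.toFinset.exists_max_image (H.dist u)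
    ⟨_, List.mem_toFinset.2 C.start_mem_support⟩
  rw [List.mem_toFinset] at hxC
  obtain ⟨a, b, hab, hnbr⟩ := Set.ncard_eq_two.1 (hC.ncard_neighborSet_toSubgraph_eq_two hxC)
  have hnbr_le : ∀ y ∈ C.toSubgraph.neighborSet x, H.Adj x y ∧ H.dist u y ≤ H.dist u x :=
    fun y hy => ⟨hy.adj_sub, hmax y (List.mem_toFinset.2 (C.mem_verts_toSubgraph.1 hy.snd_mem))⟩
  obtain ⟨ha, hda⟩ := hnbr_le a (by rw [hnbr]; simp)
  obtain ⟨hb, hdb⟩ := hnbr_le b (by rw [hnbr]; simp)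
  obtain ⟨hxu, hxg⟩ := hCball x hxC
  obtain ⟨C', hC', hlen⟩ := exists_isCycle_of_adj_of_adj hxu hab ha hb hda hdb
  exact ⟨x, hxu, hxg, C', hC', by omega⟩

theorem exists_lollipop_walk_of_isTrail {C : H.Walk x x} (hC : C.IsTrail)
    (hx : H.Reachable u x) :
    ∃ z, ∃ T : H.Walk u z, H.dist u z ≤ H.dist u x ∧ T.length = H.dist u z + C.length ∧
      T.edges.Nodup ∧ T.getVert (H.dist u z) = z := by
  classical
  obtain ⟨z, hzC, hmin⟩ := C.support.toFinset.exists_min_image (H.dist u)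
    ⟨x, List.mem_toFinset.2 C.start_mem_support⟩
  rw [List.mem_toFinset] at hzC
  obtain ⟨P, hP⟩ := (hx.trans (C.takeUntil z hzC).reachable).exists_walk_length_eq_dist
  -- `z` is a vertex of `C` nearest to `u`, so a shortest walk to `z` meets `C` only in `z`
  have hPC : ∀ v ∈ P.support, v ∈ (C.rotate z hzC).support → v = z := fun v hvP hvC => by
    rw [Walk.mem_support_rotate_iff] at hvC
    by_contra hvz
    exact (P.dist_lt_of_mem_support hP hvP hvz).not_ge (hmin v (List.mem_toFinset.2 hvC))
  refine ⟨z, P.append (C.rotate z hzC), hmin x (List.mem_toFinset.2 C.start_mem_support),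
    by simp [hP], ?_, ?_⟩
  · rw [Walk.edges_append, List.nodup_append]
    refine ⟨(P.isPath_of_length_eq_dist hP).isTrail.edges_nodup,
      (hC.rotate hzC).edges_nodup, fun e heP e' heC hee => ?_⟩
    subst hee
    induction e using Sym2.ind with
    | _ v w =>
      have hv := hPC v (P.fst_mem_support_of_mem_edges heP)
        (Walk.fst_mem_support_of_mem_edges _ heC)
      have hw := hPC w (P.snd_mem_support_of_mem_edges heP)
        (Walk.snd_mem_support_of_mem_edges _ heC)
      exact (P.adj_of_mem_edges heP).ne (hv.trans hw.symm)
  · rw [Walk.getVert_append, ← hP]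
    simp

-- Walks are encoded by their vertex sequences, so that all candidate walks of a given length
-- form one finite type, whatever their end points.
def stepEdge {n : ℕ} (f : Fin (n + 1) → V) (i : Fin n) : Sym2 V := s(f i.castSucc, f i.succ)

def IsWalkSeq (G : SimpleGraph V) (u : V) {n : ℕ} (f : Fin (n + 1) → V) : Prop :=
  f 0 = u ∧ ∀ i : Fin n, G.Adj (f i.castSucc) (f i.succ)

-- A stick of length `p` from `u` followed by a closed walk of length `c` at its tip, through
-- pairwise distinct edges.
def IsLollipop (G : SimpleGraph V) (u : V) (p c : ℕ) (f : Fin (p + c + 1) → V) : Prop :=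
  G.IsWalkSeq u f ∧ f (Fin.last _) = f ⟨p, by omega⟩ ∧ (stepEdge f).Injective

theorem IsWalkSeq.init {G : SimpleGraph V} {n : ℕ} {f : Fin (n + 2) → V}
    (hf : G.IsWalkSeq u f) : G.IsWalkSeq u (Fin.init f) :=
  ⟨hf.1, fun i => by simpa [Fin.init] using hf.2 i.castSucc⟩

theorem Walk.isLollipop_getVert {T : H.Walk u z} {p c : ℕ} (hlen : T.length = p + c)
    (hT : T.edges.Nodup) (hp : T.getVert p = z) :
    H.IsLollipop u p c (fun i => T.getVert i) := by
  have hstep : ∀ i : Fin (p + c), stepEdge (fun i => T.getVert i) i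
      = T.edges[i.1]'(by rw [Walk.length_edges]; omega) := fun i => by
    simp [stepEdge, Walk.getElem_edges]
  refine ⟨⟨T.getVert_zero, fun i => ?_⟩, ?_, fun i j hij => ?_⟩
  · simpa using T.adj_getVert_succ (i := i) (by omega)
  · simp [← hlen, hp]
  · rw [hstep, hstep] at hij
    exact Fin.ext (hT.getElem_inj_iff.1 hij)

theorem exists_isLollipop_of_ballHasCycle {g : ℕ} (h : ballHasCycle H u g) :
    ∃ p ≤ g, ∃ c < 2 * g + 1, ∃ f, H.IsLollipop u p (c + 1) f := by
  obtain ⟨x, hx, hxg, C, hC, hlen⟩ := exists_isCycle_of_ballHasCycle h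
  obtain ⟨z, T, hzx, hTlen, hT, hTz⟩ := exists_lollipop_walk_of_isTrail hC.isTrail hx
  have := hC.three_le_length
  exact ⟨H.dist u z, by omega, C.length - 1, by omega, _,
    T.isLollipop_getVert (by omega) hT hTz⟩

theorem keptSubgraph_adj {Ω : Type*} {G : SimpleGraph V} {B : Sym2 V → Ω → Bool} {ω : Ω} :
    (keptSubgraph G B ω).Adj x y ↔ G.Adj x y ∧ B s(x, y) ω = true := by
  simp only [keptSubgraph, fromEdgeSet_adj, Set.mem_ofPred_eq, mem_edgeSet]
  exact ⟨fun h => h.1, fun h => ⟨h, h.1.ne⟩⟩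

theorem IsLollipop.of_keptSubgraph {Ω : Type*} {G : SimpleGraph V} {B : Sym2 V → Ω → Bool}
    {ω : Ω} {p c : ℕ} {f : Fin (p + c + 1) → V}
    (hf : (keptSubgraph G B ω).IsLollipop u p c f) :
    G.IsLollipop u p c f ∧ ∀ i, B (stepEdge f i) ω = true :=
  ⟨⟨⟨hf.1.1, fun i => (keptSubgraph_adj.1 (hf.1.2 i)).1⟩, hf.2⟩,
    fun i => (keptSubgraph_adj.1 (hf.1.2 i)).2⟩

section Counting

open Finset Classical

variable [Fintype V] (G : SimpleGraph V)

theorem card_isWalkSeq_le [DecidableRel G.Adj] (u : V) (n : ℕ) :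
    #{f : Fin (n + 1) → V | G.IsWalkSeq u f} ≤ G.maxDegree ^ n := by
  induction n with
  | zero =>
    refine card_le_one.2 fun f hf f' hf' => funext fun i => ?_
    simp only [mem_filter, mem_univ, true_and] at hf hf'
    rw [Fin.fin_one_eq_zero i, hf.1, hf'.1]
  | succ n ih =>
    calc #{f : Fin (n + 2) → V | G.IsWalkSeq u f}
        ≤ #(({f : Fin (n + 1) → V | G.IsWalkSeq u f} : Finset _).sigma
            fun f => G.neighborFinset (f (Fin.last n))) := by
          refine card_le_card_of_surjOn (fun x => Fin.snoc x.1 x.2) fun f hf => ?_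
          simp only [coe_filter, mem_univ, true_and, Set.mem_ofPred_eq] at hf
          refine ⟨⟨Fin.init f, f (Fin.last _)⟩, ?_, Fin.snoc_init_self f⟩
          simpa [hf.init, Fin.init] using hf.2 (Fin.last n)
      _ = ∑ f ∈ {f : Fin (n + 1) → V | G.IsWalkSeq u f}, G.degree (f (Fin.last n)) := by
          simp
      _ ≤ #{f : Fin (n + 1) → V | G.IsWalkSeq u f} * G.maxDegree := by
          simpa using sum_le_sum fun (f : Fin (n + 1) → V) _ =>
            G.degree_le_maxDegree (f (Fin.last n))
      _ ≤ G.maxDegree ^ (n + 1) := by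
          rw [pow_succ]
          exact Nat.mul_le_mul_right _ ih

theorem card_isLollipop_le (u : V) (p c : ℕ) :
    #{f : Fin (p + (c + 1) + 1) → V | G.IsLollipop u p (c + 1) f}
      ≤ #{f : Fin (p + c + 1) → V | G.IsWalkSeq u f} := by
  refine card_le_card_of_injOn Fin.init (fun f hf => ?_) fun f hf f' hf' hff' => ?_
  · simp only [coe_filter, mem_univ, true_and, Set.mem_ofPred_eq] at hf ⊢
    exact hf.1.init
  · simp only [coe_filter, mem_univ, true_and, Set.mem_ofPred_eq] at hf hf'
    -- the last vertex of a lollipop repeats its `p`-th one, so `Fin.init` loses nothing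
    rw [← Fin.snoc_init_self f, ← Fin.snoc_init_self f', hf.2.1, hf'.2.1]
    exact congrArg₂ Fin.snoc hff' (congrFun hff' ⟨p, by omega⟩)

end Counting

end SimpleGraph

open Finset SimpleGraph
open scoped ENNReal

theorem ProbabilityTheory.iIndepFun.measure_forall_eq_true {Ω ι κ : Type*} [MeasurableSpace Ω]
    {μ : Measure Ω} [Fintype ι] {X : κ → Ω → Bool} (hX : iIndepFun X μ) {q : ℝ≥0∞}
    (hq : ∀ k, μ {ω | X k ω = true} = q) {e : ι → κ} (he : e.Injective) :
    μ {ω | ∀ i, X (e i) ω = true} = q ^ Fintype.card ι := by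
  have hpre : {ω | ∀ i, X (e i) ω = true} = ⋂ i, X (e i) ⁻¹' {true} := by ext; simp
  rw [hpre, (hX.precomp he).meas_iInter fun i => ⟨{true}, trivial, rfl⟩]
  exact (prod_congr rfl fun i _ => hq (e i)).trans (prod_const q)

section Lollipops

open Classical

variable {V Ω : Type*} [Fintype V] [MeasurableSpace Ω] {μ : Measure Ω}
  {G : SimpleGraph V} [DecidableRel G.Adj] {B : Sym2 V → Ω → Bool}

theorem measure_exists_isLollipop_kept_le (hindep : iIndepFun (fun e : G.edgeSet => B e) μ)
    {q : ℝ≥0∞} (hq : ∀ e ∈ G.edgeSet, μ {ω | B e ω = true} = q) (u : V) (p c : ℕ) :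
    μ {ω | ∃ f, G.IsLollipop u p (c + 1) f ∧ ∀ i, B (stepEdge f i) ω = true}
      ≤ G.maxDegree ^ (p + c) * q ^ (p + c + 1) := by
  calc μ {ω | ∃ f, G.IsLollipop u p (c + 1) f ∧ ∀ i, B (stepEdge f i) ω = true}
      = μ (⋃ f ∈ ({f | G.IsLollipop u p (c + 1) f} : Finset _),
          {ω | ∀ i, B (stepEdge f i) ω = true}) := by
        congr 1
        ext ω
        simp
    _ ≤ ∑ f ∈ ({f | G.IsLollipop u p (c + 1) f} : Finset _),
          μ {ω | ∀ i, B (stepEdge f i) ω = true} := measure_biUnion_finset_le _ _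
    _ = #({f | G.IsLollipop u p (c + 1) f} : Finset _) * q ^ (p + c + 1) := by
        rw [← nsmul_eq_mul, ← sum_const]
        refine sum_congr rfl fun f hf => ?_
        simp only [mem_filter, mem_univ, true_and] at hf
        rw [hindep.measure_forall_eq_true (e := fun i => ⟨stepEdge f i, hf.1.2 i⟩)
          (fun e => hq e e.2) fun i j hij => hf.2.2 (congrArg Subtype.val hij), Fintype.card_fin]
        rfl
    _ ≤ G.maxDegree ^ (p + c) * q ^ (p + c + 1) := by
        gcongr
        exact_mod_cast (G.card_isLollipop_le u p c).trans (G.card_isWalkSeq_le u (p + c))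

theorem measure_ballHasCycle_keptSubgraph_le (hindep : iIndepFun (fun e : G.edgeSet => B e) μ)
    {q : ℝ≥0∞} (hq : ∀ e ∈ G.edgeSet, μ {ω | B e ω = true} = q) (u : V) (g : ℕ) :
    μ {ω | ballHasCycle (keptSubgraph G B ω) u g}
      ≤ ∑ p ∈ range (g + 1), ∑ c ∈ range (2 * g + 1),
          (G.maxDegree : ℝ≥0∞) ^ (p + c) * q ^ (p + c + 1) := by
  calc μ {ω | ballHasCycle (keptSubgraph G B ω) u g}
      ≤ μ (⋃ p ∈ range (g + 1), ⋃ c ∈ range (2 * g + 1),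
          {ω | ∃ f, G.IsLollipop u p (c + 1) f ∧ ∀ i, B (stepEdge f i) ω = true}) := by
        refine measure_mono fun ω hω => ?_
        obtain ⟨p, hp, c, hc, f, hf⟩ := exists_isLollipop_of_ballHasCycle hω
        simp only [Set.mem_iUnion, mem_range]
        exact ⟨p, by omega, c, hc, f, hf.of_keptSubgraph⟩
    _ ≤ _ := (measure_biUnion_finset_le _ _).trans (sum_le_sum fun p _ =>
          (measure_biUnion_finset_le _ _).trans (sum_le_sum fun c _ =>
            measure_exists_isLollipop_kept_le hindep hq u p c))

end Lollipops

theorem natCast_pow_mul_ofReal_div_pow_le {k : ℕ} {D Δ : ℝ} (hD : 0 ≤ D) (hΔ : 0 < Δ)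
    (hk : (k : ℝ) ≤ Δ) (n : ℕ) :
    (k : ℝ≥0∞) ^ n * ENNReal.ofReal (D / Δ) ^ (n + 1)
      ≤ ENNReal.ofReal (D ^ (n + 1) / Δ) := by
  rw [← ENNReal.ofReal_natCast, ← ENNReal.ofReal_pow (by positivity),
    ← ENNReal.ofReal_pow (by positivity), ← ENNReal.ofReal_mul (by positivity)]
  refine ENNReal.ofReal_le_ofReal ?_
  calc (k : ℝ) ^ n * (D / Δ) ^ (n + 1) ≤ Δ ^ n * (D / Δ) ^ (n + 1) := by gcongr
    _ = D ^ (n + 1) / Δ := by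
      rw [div_pow, pow_succ Δ, mul_div_assoc', mul_div_mul_left _ _ (pow_ne_zero n hΔ.ne')]

theorem sum_range_sum_range_pow_le {D : ℝ} (hD : 2 ≤ D) {g : ℕ} (hg : 1 ≤ g) :
    ∑ p ∈ range (g + 1), ∑ c ∈ range (2 * g + 1), D ^ (p + c + 1) ≤ 3 * D ^ (5 * g) := by
  obtain ⟨k, rfl⟩ : ∃ k, g = k + 1 := ⟨g - 1, by omega⟩
  have hcount : ∀ k : ℕ, (k + 2) * (2 * k + 3) ≤ 3 * 2 ^ (2 * k + 1) := by
    intro k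
    induction k with
    | zero => norm_num
    | succ k ih => rw [show 2 * (k + 1) + 1 = 2 * k + 1 + 2 by ring, pow_add]; nlinarith
  calc ∑ p ∈ range (k + 1 + 1), ∑ c ∈ range (2 * (k + 1) + 1), D ^ (p + c + 1)
      ≤ ∑ p ∈ range (k + 1 + 1), ∑ c ∈ range (2 * (k + 1) + 1), D ^ (3 * k + 4) := by
        refine sum_le_sum fun p hp => sum_le_sum fun c hc => pow_le_pow_right₀ (by linarith) ?_
        simp only [mem_range] at hp hc
        omega
    _ = ((k + 2) * (2 * k + 3) : ℕ) * D ^ (3 * k + 4) := by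
        simp only [sum_const, card_range, nsmul_eq_mul]
        push_cast
        ring
    _ ≤ (3 * 2 ^ (2 * k + 1) : ℕ) * D ^ (3 * k + 4) :=
        mul_le_mul_of_nonneg_right (by exact_mod_cast hcount k) (by positivity)
    _ ≤ 3 * D ^ (2 * k + 1) * D ^ (3 * k + 4) := by push_cast; gcongr
    _ = 3 * D ^ (5 * (k + 1)) := by ring

theorem stmt_14_general {V : Type*} [Fintype V]
    (G : SimpleGraph V) [DecidableRel G.Adj]
    {Ω : Type*} [MeasurableSpace Ω] (μ : Measure Ω)
    (D Δ : ℝ) (hD2 : 2 ≤ D) (hDΔ : D ≤ Δ)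
    (hdeg : ∀ u : V, (G.degree u : ℝ) ≤ Δ)
    (B : Sym2 V → Ω → Bool)
    (hindep : iIndepFun
      (fun e : G.edgeSet => B e) μ)
    (hdist : ∀ e ∈ G.edgeSet, μ {ω | B e ω = true} = ENNReal.ofReal (D / Δ)) :
    ∀ u : V, ∀ g : ℕ, 1 ≤ g →
      μ {ω | ballHasCycle (keptSubgraph G B ω) u g} ≤ ENNReal.ofReal (3 * D ^ (5 * g) / Δ) := by
  intro u g hg
  have hΔ : 0 < Δ := by linarith
  have hmax : (G.maxDegree : ℝ) ≤ Δ := by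
    have : Nonempty V := ⟨u⟩
    obtain ⟨v, hv⟩ := G.exists_maximal_degree_vertex
    exact hv ▸ hdeg v
  have hterm : ∀ p c, 0 ≤ D ^ (p + c + 1) / Δ := fun p c => by positivity
  calc μ {ω | ballHasCycle (keptSubgraph G B ω) u g}
      ≤ ∑ p ∈ range (g + 1), ∑ c ∈ range (2 * g + 1),
          (G.maxDegree : ℝ≥0∞) ^ (p + c) * ENNReal.ofReal (D / Δ) ^ (p + c + 1) :=
        measure_ballHasCycle_keptSubgraph_le hindep hdist u g
    _ ≤ ∑ p ∈ range (g + 1), ∑ c ∈ range (2 * g + 1),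
          ENNReal.ofReal (D ^ (p + c + 1) / Δ) := by
        gcongr with p _ c _
        exact natCast_pow_mul_ofReal_div_pow_le (by linarith) hΔ hmax _
    _ = ENNReal.ofReal
          (∑ p ∈ range (g + 1), ∑ c ∈ range (2 * g + 1), D ^ (p + c + 1) / Δ) := by
        simp only [ENNReal.ofReal_sum_of_nonneg fun _ _ => hterm _ _,
          ENNReal.ofReal_sum_of_nonneg fun _ _ => sum_nonneg fun _ _ => hterm _ _]
    _ ≤ ENNReal.ofReal (3 * D ^ (5 * g) / Δ) := by
        refine ENNReal.ofReal_le_ofReal ?_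
        simp only [← sum_div]
        exact div_le_div_of_nonneg_right (sum_range_sum_range_pow_le hD2 hg) hΔ.le

/-- Let `G` be a finite simple graph with maximum degree at most `Δ`, let `2 ≤ D ≤ Δ`, and
let `G'` be the random subgraph of `G` obtained by keeping each edge independently with
probability `D/Δ`. Then for every vertex `u` and every integer `g ≥ 1`, the probability
that the `g`-neighborhood of `u` in `G'` contains a cycle is at most `3·D^{5g}/Δ`. -/
theorem stmt_14 {V : Type*} [Fintype V] [DecidableEq V]
    (G : SimpleGraph V) [DecidableRel G.Adj]
    {Ω : Type*} [MeasurableSpace Ω] (μ : Measure Ω) [IsProbabilityMeasure μ]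
    (D Δ : ℝ) (hD2 : 2 ≤ D) (hDΔ : D ≤ Δ)
    (hdeg : ∀ u : V, (G.degree u : ℝ) ≤ Δ)
    (B : Sym2 V → Ω → Bool)
    (hmeas : ∀ e, Measurable (B e))
    (hindep : iIndepFun
      (fun e : G.edgeSet => B e) μ)
    (hdist : ∀ e ∈ G.edgeSet, μ {ω | B e ω = true} = ENNReal.ofReal (D / Δ)) :
    ∀ u : V, ∀ g : ℕ, 1 ≤ g →
      μ {ω | ballHasCycle (keptSubgraph G B ω) u g} ≤ ENNReal.ofReal (3 * D ^ (5 * g) / Δ) :=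
  stmt_14_general G μ D Δ hD2 hDΔ hdeg B hindep hdist
end
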